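/- arXiv:2409.01309 — 15 statements merged into one kernel-verified Lean document; each statement's English description precedes it below -/
import Mathlib

section
/- The local f-divergence is lower-bounded by a function of the local error mismatch: D_f(p‖q) ≥ (f(1+Δ) + f(1−Δ))/2. -/
/-- Monotonicity of `δ ↦ f (1+δ) + f (1-δ)` for convex `f`. -/
lemma local_f_div_mono (f : ℝ → ℝ) (hf : ConvexOn ℝ (Set.Ici (0 : ℝ)) f)
    {Δ δ : ℝ} (h0 : 0 ≤ Δ) (h1 : Δ ≤ δ) (h2 : δ ≤ 1) :
    f (1 + Δ) + f (1 - Δ) ≤ f (1 + δ) + f (1 - δ) := by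
  rcases eq_or_lt_of_le (h0.trans h1) with h | hδ
  · have hΔ : Δ = 0 := le_antisymm (h1.trans h.symm.le) h0
    simp [← h, hΔ]
  · have hδ0 : (0:ℝ) < 2 * δ := by linarith
    set t : ℝ := (δ + Δ) / (2 * δ) with ht
    have ht0 : 0 ≤ t := by positivity
    have ht1 : t ≤ 1 := by
      rw [ht, div_le_one hδ0]; linarith
    have hmem1 : (1 + δ) ∈ Set.Ici (0:ℝ) := by simp; linarith
    have hmem2 : (1 - δ) ∈ Set.Ici (0:ℝ) := by simp [h2]
    have j1 := hf.2 hmem1 hmem2 ht0 (show (0:ℝ) ≤ 1 - t by linarith)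
      (show t + (1 - t) = 1 by ring)
    have j2 := hf.2 hmem1 hmem2 (show (0:ℝ) ≤ 1 - t by linarith) ht0
      (show (1 - t) + t = 1 by ring)
    simp only [smul_eq_mul] at j1 j2
    have ht2 : 2 * δ * t = δ + Δ := by
      rw [ht, mul_div_assoc']
      exact mul_div_cancel_left₀ _ hδ0.ne'
    have e1 : t * (1 + δ) + (1 - t) * (1 - δ) = 1 + Δ := by linear_combination ht2
    have e2 : (1 - t) * (1 + δ) + t * (1 - δ) = 1 - Δ := by linear_combination -ht2
    rw [e1] at j1
    rw [e2] at j2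
    linarith

/-- The local f-divergence is lower-bounded by a function of the local error mismatch:
`D_f(p‖q) ≥ (f(1+Δ) + f(1−Δ))/2` where `Δ := p(c_*) − p(c_q)`. -/
theorem local_f_divergence_bound {C : Type*} [Fintype C]
    (p q : C → ℝ)
    (hp0 : ∀ c, 0 ≤ p c) (hp1 : ∑ c, p c = 1)
    (hq0 : ∀ c, 0 < q c) (hq1 : ∑ c, q c = 1)
    (cs cq : C) (hcs : ∀ c, p c ≤ p cs) (hcq : ∀ c, q c ≤ q cq)
    (f : ℝ → ℝ) (hf : ConvexOn ℝ (Set.Ici (0 : ℝ)) f) (hf1 : f 1 = 0) :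
    ∑ c, q c * f (p c / q c) ≥
      (f (1 + (p cs - p cq)) + f (1 - (p cs - p cq))) / 2 := by
  classical
  have hzmem : ∀ c, p c / q c ∈ Set.Ici (0:ℝ) := fun c =>
    div_nonneg (hp0 c) (hq0 c).le
  have hqz : ∀ c, q c * (p c / q c) = p c := fun c =>
    mul_div_cancel₀ _ (hq0 c).ne'
  have key : ∀ s : C → ℝ, (∀ c, -1 ≤ s c) → (∀ c, s c ≤ 1) →
      (∑ c, s c * q c = 0) →
      f (1 + ∑ c, s c * p c) + f (1 - ∑ c, s c * p c)
        ≤ 2 * ∑ c, q c * f (p c / q c) := by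
    intro s hm1 hs1 hsq
    have h1 : f (1 + ∑ c, s c * p c) ≤ ∑ c, (1 + s c) * q c * f (p c / q c) := by
      have J := hf.map_sum_le (t := Finset.univ) (w := fun c => (1 + s c) * q c)
        (p := fun c => p c / q c)
        (fun c _ => mul_nonneg (by linarith [hm1 c]) (hq0 c).le)
        (by rw [Finset.sum_congr rfl
            (fun c _ => by ring : ∀ c ∈ Finset.univ, (1 + s c) * q c = q c + s c * q c),
            Finset.sum_add_distrib, hq1, hsq, add_zero])
        (fun c _ => hzmem c)
      simp only [smul_eq_mul] at J
      have harg : ∑ c, (1 + s c) * q c * (p c / q c) = 1 + ∑ c, s c * p c := by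
        rw [Finset.sum_congr rfl (fun c _ => by
          rw [mul_assoc, hqz c] : ∀ c ∈ Finset.univ,
            (1 + s c) * q c * (p c / q c) = (1 + s c) * p c),
          Finset.sum_congr rfl
            (fun c _ => by ring : ∀ c ∈ Finset.univ, (1 + s c) * p c = p c + s c * p c),
          Finset.sum_add_distrib, hp1]
      rw [harg] at J
      exact J
    have h2 : f (1 - ∑ c, s c * p c) ≤ ∑ c, (1 - s c) * q c * f (p c / q c) := by
      have J := hf.map_sum_le (t := Finset.univ) (w := fun c => (1 - s c) * q c)
        (p := fun c => p c / q c)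
        (fun c _ => mul_nonneg (by linarith [hs1 c]) (hq0 c).le)
        (by rw [Finset.sum_congr rfl
            (fun c _ => by ring : ∀ c ∈ Finset.univ, (1 - s c) * q c = q c - s c * q c),
            Finset.sum_sub_distrib, hq1, hsq, sub_zero])
        (fun c _ => hzmem c)
      simp only [smul_eq_mul] at J
      have harg : ∑ c, (1 - s c) * q c * (p c / q c) = 1 - ∑ c, s c * p c := by
        rw [Finset.sum_congr rfl (fun c _ => by
          rw [mul_assoc, hqz c] : ∀ c ∈ Finset.univ,
            (1 - s c) * q c * (p c / q c) = (1 - s c) * p c),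
          Finset.sum_congr rfl
            (fun c _ => by ring : ∀ c ∈ Finset.univ, (1 - s c) * p c = p c - s c * p c),
          Finset.sum_sub_distrib, hp1]
      rw [harg] at J
      exact J
    calc f (1 + ∑ c, s c * p c) + f (1 - ∑ c, s c * p c)
        ≤ ∑ c, (1 + s c) * q c * f (p c / q c)
          + ∑ c, (1 - s c) * q c * f (p c / q c) := add_le_add h1 h2
      _ = 2 * ∑ c, q c * f (p c / q c) := by
          rw [← Finset.sum_add_distrib, Finset.mul_sum]
          exact Finset.sum_congr rfl fun c _ => by ring
  have hpcs1 : p cs ≤ 1 := by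
    rw [← hp1]
    exact Finset.single_le_sum (fun c _ => hp0 c) (Finset.mem_univ cs)
  have hΔ0 : 0 ≤ p cs - p cq := by linarith [hcs cq]
  by_cases hne : cs = cq
  · have h := key (fun _ => 0) (fun _ => by norm_num) (fun _ => by norm_num)
      (by simp)
    simp only [zero_mul, Finset.sum_const_zero, add_zero, sub_zero, hf1] at h
    rw [hne]
    simp only [sub_self, add_zero, sub_zero, hf1]
    linarith
  · set a : ℝ := q cs / q cq with ha
    have ha0 : 0 ≤ a := div_nonneg (hq0 cs).le (hq0 cq).le
    have ha1 : a ≤ 1 := (div_le_one (hq0 cq)).mpr (hcq cs)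
    have hne' : cq ≠ cs := fun h => hne h.symm
    have haq : a * q cq = q cs := div_mul_cancel₀ _ (hq0 cq).ne'
    set s : C → ℝ := fun c => if c = cs then 1 else if c = cq then -a else 0 with hs
    have hsum : ∀ g : C → ℝ, ∑ c, s c * g c = g cs + (-a) * g cq := by
      intro g
      have hpt : ∀ c ∈ Finset.univ, s c * g c =
          (if c = cs then g c else 0) + (if c = cq then (-a) * g c else 0) := by
        intro c _
        by_cases h1 : c = cs
        · subst h1; simp [hs, hne]
        · by_cases h2 : c = cq
          · subst h2; simp [hs, h1]
          · simp [hs, h1, h2]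
      rw [Finset.sum_congr rfl hpt, Finset.sum_add_distrib]
      simp [Finset.sum_ite_eq']
    have hsq : ∑ c, s c * q c = 0 := by
      rw [hsum]; linarith [haq]
    set δ : ℝ := ∑ c, s c * p c with hδ
    have hδval : δ = p cs - a * p cq := by rw [hδ, hsum]; ring
    have hsb : ∀ c, s c = 1 ∨ s c = -a ∨ s c = 0 := by
      intro c
      by_cases h1 : c = cs
      · left; simp [hs, h1]
      · by_cases h2 : c = cq
        · right; left; simp [hs, h1, h2, hne']
        · right; right; simp [hs, h1, h2]
    have hδΔ : p cs - p cq ≤ δ := by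
      rw [hδval]
      nlinarith [hp0 cq]
    have hδ1 : δ ≤ 1 := by
      rw [hδval]
      nlinarith [hp0 cq]
    have h := key s
      (fun c => by rcases hsb c with h|h|h <;> rw [h] <;> linarith)
      (fun c => by rcases hsb c with h|h|h <;> rw [h] <;> linarith)
      hsq
    rw [← hδ] at h
    have hmono := local_f_div_mono f hf hΔ0 hδΔ hδ1
    linarith
end

section
/- The local Kullback-Leibler divergence is lower-bounded by B applied to the local error mismatch: ∑_c p(c)·log(p(c)/q(c)) ≥ B(Δ). -/
/-- `B(u) := ((1+u)·log(1+u) + (1−u)·log(1−u))/2` (natural log; in Lean `Real.log 0 = 0`,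
which realizes the convention `0·log 0 = 0`). -/
noncomputable def B (u : ℝ) : ℝ :=
  ((1 + u) * Real.log (1 + u) + (1 - u) * Real.log (1 - u)) / 2

private lemma aux_pt (pc qc rc : ℝ) (hp : 0 ≤ pc) (hq : 0 < qc) (hr : 0 ≤ rc)
    (h : pc = 0 ∨ 0 < rc) :
    pc * Real.log rc + (pc - qc * rc) ≤ pc * Real.log (pc / qc) := by
  rcases eq_or_lt_of_le hp with h0 | h0
  · rw [← h0]
    have : 0 ≤ qc * rc := mul_nonneg hq.le hr
    simp; linarith
  · have hrpos : 0 < rc := by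
      rcases h with h | h
      · exact absurd h h0.ne'
      · exact h
    have hx : 0 < qc * rc / pc := by positivity
    have hlog := Real.log_le_sub_one_of_pos hx
    have e1 : Real.log (qc * rc / pc) = Real.log qc + Real.log rc - Real.log pc := by
      rw [Real.log_div (by positivity) h0.ne', Real.log_mul hq.ne' hrpos.ne']
    have e2 : Real.log (pc / qc) = Real.log pc - Real.log qc :=
      Real.log_div h0.ne' hq.ne'
    rw [e1] at hlog
    rw [e2]
    have h2 : pc * (Real.log qc + Real.log rc - Real.log pc) ≤
        pc * (qc * rc / pc - 1) := by
      exact mul_le_mul_of_nonneg_left hlog hp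
    have h3 : pc * (qc * rc / pc - 1) = qc * rc - pc := by
      field_simp
    nlinarith [h2, h3]

/-- The local KL divergence is lower-bounded by `B` applied to the local error mismatch:
`∑_c p(c)·log(p(c)/q(c)) ≥ B(Δ)` where `Δ := p(c_*) − p(c_q)`.
(Terms with `p c = 0` contribute `0` since `0 * log _ = 0`.) -/
theorem local_kl_divergence_bound {C : Type*} [Fintype C]
    (p q : C → ℝ)
    (hp0 : ∀ c, 0 ≤ p c) (hp1 : ∑ c, p c = 1)
    (hq0 : ∀ c, 0 < q c) (hq1 : ∑ c, q c = 1)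
    (cs cq : C) (hcs : ∀ c, p c ≤ p cs) (hcq : ∀ c, q c ≤ q cq) :
    ∑ c, p c * Real.log (p c / q c) ≥ B (p cs - p cq) := by
  classical
  set Δ : ℝ := p cs - p cq with hΔdef
  have hΔ0 : 0 ≤ Δ := sub_nonneg.2 (hcs cq)
  have hpcs1 : p cs ≤ 1 := by
    have := Finset.single_le_sum (f := p) (fun c _ => hp0 c) (Finset.mem_univ cs)
    linarith [hp1 ▸ this]
  have hΔ1 : Δ ≤ 1 := by have := hp0 cq; simp only [hΔdef]; linarith
  by_cases hne : cs = cq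
  · -- Δ = 0, just need KL ≥ 0
    have hΔz : Δ = 0 := by simp [hΔdef, hne]
    rw [hΔz]
    have hB0 : B 0 = 0 := by simp [B]
    rw [hB0]
    have key : ∀ c, p c * Real.log 1 + (p c - q c * 1) ≤ p c * Real.log (p c / q c) :=
      fun c => aux_pt (p c) (q c) 1 (hp0 c) (hq0 c) zero_le_one (Or.inr one_pos)
    have hsum := Finset.sum_le_sum (fun c (_ : c ∈ Finset.univ) => key c)
    simp only [Real.log_one, mul_zero, zero_add, mul_one] at hsum
    rw [Finset.sum_sub_distrib, hp1, hq1] at hsum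
    linarith
  · -- main case
    have hne' : ¬cq = cs := fun h => hne h.symm
    have hpair : p cs + p cq ≤ 1 := by
      have hsub : ({cs, cq} : Finset C) ⊆ Finset.univ := Finset.subset_univ _
      have := Finset.sum_le_sum_of_subset_of_nonneg hsub (fun c _ _ => hp0 c)
      rw [Finset.sum_pair hne, hp1] at this
      exact this
    set r : C → ℝ := fun c => if c = cs then 1 + Δ else if c = cq then 1 - Δ else 1
      with hrdef
    have hr0 : ∀ c, 0 ≤ r c := by
      intro c
      simp only [hrdef]
      split_ifs <;> linarith
    have hrpos : ∀ c, p c = 0 ∨ 0 < r c := by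
      intro c
      simp only [hrdef]
      by_cases h1 : c = cs
      · right; simp [h1]; linarith
      · by_cases h2 : c = cq
        · rcases eq_or_lt_of_le hΔ1 with hΔe | hΔl
          · left
            have : p cq = 0 := by
              have := hp0 cq; simp only [hΔdef] at hΔe; linarith
            rw [h2]; exact this
          · right; simp [h1, h2, hne']; linarith
        · right; simp [h1, h2]
    have key : ∀ c, p c * Real.log (r c) + (p c - q c * r c) ≤ p c * Real.log (p c / q c) :=
      fun c => aux_pt (p c) (q c) (r c) (hp0 c) (hq0 c) (hr0 c) (hrpos c)
    have hsum := Finset.sum_le_sum (fun c (_ : c ∈ Finset.univ) => key c)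
    rw [Finset.sum_add_distrib, Finset.sum_sub_distrib, hp1] at hsum
    -- compute ∑ p c * log (r c)
    have S1 : ∑ c, p c * Real.log (r c)
        = p cs * Real.log (1 + Δ) + p cq * Real.log (1 - Δ) := by
      have : ∀ c ∈ Finset.univ, p c * Real.log (r c)
          = (if c = cs then p cs * Real.log (1 + Δ) else 0)
            + (if c = cq then p cq * Real.log (1 - Δ) else 0) := by
        intro c _
        by_cases h1 : c = cs
        · have h2 : ¬ c = cq := by rw [h1]; exact hne
          simp [hrdef, h1, h2, hne]
        · by_cases h2 : c = cq
          · simp [hrdef, h1, h2, hne']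
          · simp [hrdef, h1, h2]
      rw [Finset.sum_congr rfl this, Finset.sum_add_distrib]
      simp
    -- compute ∑ q c * r c
    have S2 : ∑ c, q c * r c = 1 + Δ * (q cs - q cq) := by
      have : ∀ c ∈ Finset.univ, q c * r c
          = q c + ((if c = cs then q cs * Δ else 0) - (if c = cq then q cq * Δ else 0)) := by
        intro c _
        by_cases h1 : c = cs
        · have h2 : ¬ c = cq := by rw [h1]; exact hne
          simp [hrdef, h1, h2, hne]; ring
        · by_cases h2 : c = cq
          · simp [hrdef, h1, h2, hne']; ring
          · simp [hrdef, h1, h2]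
      rw [Finset.sum_congr rfl this, Finset.sum_add_distrib, Finset.sum_sub_distrib, hq1]
      simp; ring
    have hqr1 : ∑ c, q c * r c ≤ 1 := by
      rw [S2]
      have : Δ * (q cs - q cq) ≤ 0 :=
        mul_nonpos_of_nonneg_of_nonpos hΔ0 (by linarith [hcq cs])
      linarith
    rw [S1] at hsum
    -- final: B Δ ≤ p cs * log(1+Δ) + p cq * log(1-Δ)
    have final : B Δ ≤ p cs * Real.log (1 + Δ) + p cq * Real.log (1 - Δ) := by
      rcases eq_or_lt_of_le hΔ1 with hΔe | hΔl
      · have hpcq0 : p cq = 0 := by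
          have := hp0 cq; simp only [hΔdef] at hΔe; linarith
        have hpcs : p cs = 1 := by simp only [hΔdef] at hΔe; linarith
        rw [hΔe]
        norm_num [B, hpcq0, hpcs]
      · have h1p : (0:ℝ) < 1 + Δ := by linarith
        have h1m : (0:ℝ) < 1 - Δ := by linarith
        have hlogsum : Real.log (1 + Δ) + Real.log (1 - Δ) ≤ 0 := by
          rw [← Real.log_mul h1p.ne' h1m.ne']
          apply Real.log_nonpos (by positivity)
          nlinarith
        have ht : p cs + p cq - 1 ≤ 0 := by linarith
        have hprod : 0 ≤ (1 - p cs - p cq) * (-(Real.log (1 + Δ) + Real.log (1 - Δ))) :=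
          mul_nonneg (by linarith) (by linarith)
        simp only [B, hΔdef]
        nlinarith [hprod]
    linarith
end

section
/- The conditional Kullback-Leibler divergence is lower-bounded by B applied to the global error mismatch: ∑_{x : pr(x)>0} pr(x) · ∑_c pr(c|x)·log(pr(c|x)/q(c|x)) ≥ B(Δ_q). -/
lemma B_zero : B 0 = 0 := by simp [B]

lemma sub_le_mul_log_div {x y : ℝ} (hx : 0 ≤ x) (hy : 0 < y) :
    x - y ≤ x * Real.log (x / y) := by
  rcases eq_or_lt_of_le hx with h | h
  · simp [← h]; linarith
  · have hd : 0 < y / x := div_pos hy h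
    have h1 : Real.log (y / x) ≤ y / x - 1 := Real.log_le_sub_one_of_pos hd
    have hlog : Real.log (x / y) = - Real.log (y / x) := by
      rw [← Real.log_inv]; congr 1; field_simp
    rw [hlog]
    have h2 : (y / x - 1) * x = y - x := by field_simp
    nlinarith

lemma mul_log_div_expand {a b : ℝ} (ha : 0 ≤ a) (hb : 0 < b) :
    a * Real.log (a / b) = a * Real.log a - a * Real.log b := by
  rcases eq_or_lt_of_le ha with h | h
  · simp [← h]
  · rw [Real.log_div (ne_of_gt h) (ne_of_gt hb)]; ring

lemma convexOn_B : ConvexOn ℝ (Set.Icc (-1:ℝ) 1) B := by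
  have h1 := Real.convexOn_mul_log.comp_affineMap
    (AffineMap.const ℝ ℝ (1:ℝ) + AffineMap.id ℝ ℝ)
  have h2 := Real.convexOn_mul_log.comp_affineMap
    (AffineMap.const ℝ ℝ (1:ℝ) - AffineMap.id ℝ ℝ)
  have e1 : ⇑(AffineMap.const ℝ ℝ (1:ℝ) + AffineMap.id ℝ ℝ) ⁻¹' Set.Ici 0
      = Set.Ici (-1:ℝ) := by
    ext u; simp; constructor <;> intro h <;> linarith
  have e2 : ⇑(AffineMap.const ℝ ℝ (1:ℝ) - AffineMap.id ℝ ℝ) ⁻¹' Set.Ici 0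
      = Set.Iic (1:ℝ) := by
    ext u; simp [sub_nonneg]
  rw [e1] at h1; rw [e2] at h2
  have h1' := h1.subset (Set.Icc_subset_Ici_self : Set.Icc (-1:ℝ) 1 ⊆ Set.Ici (-1)) (convex_Icc _ _)
  have h2' := h2.subset (Set.Icc_subset_Iic_self : Set.Icc (-1:ℝ) 1 ⊆ Set.Iic 1) (convex_Icc _ _)
  have h3 := (h1'.add h2').smul (by norm_num : (0:ℝ) ≤ 1/2)
  convert h3 using 1
  any_goals with_reducible_and_instances rfl
  funext u
  simp [B, Function.comp]
  ring

lemma kl_ge_B {C : Type*} [Fintype C] (p q : C → ℝ)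
    (hp0 : ∀ c, 0 ≤ p c) (hp1 : ∑ c, p c = 1)
    (hq0 : ∀ c, 0 < q c) (hq1 : ∑ c, q c = 1)
    (c1 c2 : C) (h1 : ∀ c, p c ≤ p c1) (h2 : ∀ c, q c ≤ q c2) :
    B (p c1 - p c2) ≤ ∑ c, p c * Real.log (p c / q c) := by
  classical
  have klnn : 0 ≤ ∑ c, p c * Real.log (p c / q c) := by
    have hs : ∑ c, (p c - q c) ≤ ∑ c, p c * Real.log (p c / q c) :=
      Finset.sum_le_sum (fun c _ => sub_le_mul_log_div (hp0 c) (hq0 c))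
    rwa [Finset.sum_sub_distrib, hp1, hq1, sub_self] at hs
  by_cases hc : c1 = c2
  · rw [hc, sub_self, B_zero]; exact klnn
  by_cases hp1z : p c1 = 0
  · have : p c2 = 0 := le_antisymm (hp1z ▸ h1 c2) (hp0 c2)
    rw [hp1z, this, sub_self, B_zero]; exact klnn
  have hp1pos : 0 < p c1 := lt_of_le_of_ne (hp0 c1) (Ne.symm hp1z)
  set p1 := p c1 with hp1d
  set p2 := p c2 with hp2d
  set q1 := q c1 with hq1d
  set q2 := q c2 with hq2d
  clear_value p1 p2 q1 q2
  have hp2nn : 0 ≤ p2 := hp2d ▸ hp0 c2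
  have hp21 : p2 ≤ p1 := hp2d ▸ h1 c2
  have hq1pos : 0 < q1 := hq1d ▸ hq0 c1
  have hq2pos : 0 < q2 := hq2d ▸ hq0 c2
  have hq12 : q1 ≤ q2 := hq1d ▸ h2 c1
  set s := p1 + p2 with hsd
  set t := q1 + q2 with htd
  set δ := p1 - p2 with hδd
  clear_value s t δ
  have hspos : 0 < s := by rw [hsd]; linarith
  have htpos : 0 < t := by rw [htd]; linarith
  have hδnn : 0 ≤ δ := by rw [hδd]; linarith
  have hδs : δ ≤ s := by rw [hδd, hsd]; linarith
  have hsum_pair : ∑ c ∈ ({c1, c2} : Finset C), p c = s := by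
    rw [Finset.sum_pair hc, hsd, hp1d, hp2d]
  have hs1 : s ≤ 1 := by
    rw [← hp1, ← hsum_pair]
    exact Finset.sum_le_sum_of_subset_of_nonneg (Finset.subset_univ _) (fun c _ _ => hp0 c)
  set R := (Finset.univ.erase c1).erase c2 with hRd
  have hc2mem : c2 ∈ Finset.univ.erase c1 := by
    simp [Finset.mem_erase, Ne.symm hc]
  have split : ∀ g : C → ℝ, ∑ c, g c = g c1 + g c2 + ∑ c ∈ R, g c := by
    intro g
    rw [← Finset.add_sum_erase _ g (Finset.mem_univ c1),
        ← Finset.add_sum_erase _ g hc2mem, hRd]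
    ring
  have hpR : ∑ c ∈ R, p c = 1 - s := by
    have h := split p
    rw [hp1, ← hp1d, ← hp2d] at h
    rw [hsd]; linarith
  have hqR : ∑ c ∈ R, q c = 1 - t := by
    have h := split q
    rw [hq1, ← hq1d, ← hq2d] at h
    rw [htd]; linarith
  have hfR : (1 - s) - (1 - t) ≤ ∑ c ∈ R, p c * Real.log (p c / q c) := by
    have hs' : ∑ c ∈ R, (p c - q c) ≤ ∑ c ∈ R, p c * Real.log (p c / q c) :=
      Finset.sum_le_sum (fun c _ => sub_le_mul_log_div (hp0 c) (hq0 c))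
    rwa [Finset.sum_sub_distrib, hpR, hqR] at hs'
  have e1 : p1 * Real.log (p1 / q1) = p1 * Real.log p1 - p1 * Real.log q1 :=
    mul_log_div_expand (le_of_lt hp1pos) hq1pos
  have e2 : p2 * Real.log (p2 / q2) = p2 * Real.log p2 - p2 * Real.log q2 :=
    mul_log_div_expand hp2nn hq2pos
  have stepA : p1 * Real.log q1 + p2 * Real.log q2
      ≤ s * ((Real.log q1 + Real.log q2) / 2) := by
    have hl : Real.log q1 ≤ Real.log q2 := Real.log_le_log hq1pos hq12
    rw [hsd]
    nlinarith [mul_nonneg (sub_nonneg.2 hp21) (sub_nonneg.2 hl)]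
  have stepB : (Real.log q1 + Real.log q2) / 2 ≤ Real.log t - Real.log 2 := by
    have hgm : q1 * q2 ≤ (t / 2) ^ 2 := by rw [htd]; nlinarith
    have h := Real.log_le_log (by positivity) hgm
    rw [Real.log_mul (ne_of_gt hq1pos) (ne_of_gt hq2pos)] at h
    rw [Real.log_pow, Real.log_div (ne_of_gt htpos) (by norm_num)] at h
    push_cast at h
    linarith
  have stepD : s - t ≤ s * Real.log s - s * Real.log t := by
    have h := sub_le_mul_log_div (le_of_lt hspos) htpos
    rwa [mul_log_div_expand (le_of_lt hspos) htpos] at h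
  have hq12bound : p1 * Real.log q1 + p2 * Real.log q2
      ≤ s * Real.log t - s * Real.log 2 := by
    have h := mul_le_mul_of_nonneg_left stepB (le_of_lt hspos)
    have h2 : s * (Real.log t - Real.log 2) = s * Real.log t - s * Real.log 2 := by ring
    rw [h2] at h
    exact stepA.trans h
  have hM : p1 * Real.log p1 + p2 * Real.log p2 + s * Real.log 2 - s * Real.log s
      ≤ ∑ c, p c * Real.log (p c / q c) := by
    rw [split (fun c => p c * Real.log (p c / q c))]
    simp only [← hp1d, ← hp2d, ← hq1d, ← hq2d]
    rw [e1, e2]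
    linarith [hfR, stepD, hq12bound]
  have hMeq : s * B (δ / s) =
      p1 * Real.log p1 + p2 * Real.log p2 + s * Real.log 2 - s * Real.log s := by
    have hsne : s ≠ 0 := ne_of_gt hspos
    have h1u : 1 + δ / s = 2 * p1 / s := by
      field_simp
      rw [hδd, hsd]; ring
    have h2u : 1 - δ / s = 2 * p2 / s := by
      field_simp
      rw [hδd, hsd]; ring
    rw [B, h1u, h2u]
    rcases eq_or_lt_of_le hp2nn with hp2z | hp2pos
    · have hsp : s = p1 := by rw [hsd, ← hp2z, add_zero]
      rw [← hp2z, hsp]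
      have ha : 2 * p1 / p1 = 2 := by field_simp
      have hb : 2 * (0:ℝ) / p1 = 0 := by simp
      rw [ha, hb, Real.log_zero]
      ring
    · rw [Real.log_div (by positivity : (2:ℝ) * p1 ≠ 0) hsne,
          Real.log_div (by positivity : (2:ℝ) * p2 ≠ 0) hsne,
          Real.log_mul two_ne_zero (ne_of_gt hp1pos),
          Real.log_mul two_ne_zero (ne_of_gt hp2pos)]
      have hrw : ∀ a : ℝ, 0 < a → 2 * a / s * (Real.log 2 + Real.log a - Real.log s)
          = 2 * a / s * Real.log 2 + 2 * a / s * Real.log a - 2 * a / s * Real.log s := by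
        intro a _; ring
      field_simp
      rw [hsd]
      ring
  have hpersp : B δ ≤ s * B (δ / s) := by
    have hmem1 : δ / s ∈ Set.Icc (-1:ℝ) 1 := by
      constructor
      · have h : 0 ≤ δ / s := div_nonneg hδnn (le_of_lt hspos)
        linarith
      · rw [div_le_one hspos]; exact hδs
    have hmem0 : (0:ℝ) ∈ Set.Icc (-1:ℝ) 1 := by norm_num
    have h := convexOn_B.2 hmem1 hmem0 (le_of_lt hspos) (by linarith : (0:ℝ) ≤ 1 - s)
      (by ring : s + (1 - s) = 1)
    simp only [smul_eq_mul, mul_zero, add_zero, B_zero] at h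
    have hc : s * (δ / s) = δ := by field_simp
    rw [hc] at h
    linarith
  calc B δ ≤ s * B (δ / s) := hpersp
    _ = _ := hMeq
    _ ≤ _ := hM

/-- The conditional KL divergence is lower-bounded by `B` of the global error mismatch:
`∑_{x : pr(x)>0} pr(x) · ∑_c pr(c|x)·log(pr(c|x)/q(c|x)) ≥ B(Δ_q)`.
Here `pr(x) := ∑_c pr(c,x)`, `pr(c|x) := pr(c,x)/pr(x)`, `q(c|x) := q(c,x)/q(x)`,
and `Δ_q := ∑_x (pr(c_*^x,x) − pr(c_q^x,x))`. Terms with `pr(c|x) = 0` contribute `0`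
since `0 * log _ = 0`. -/
theorem conditional_kl_divergence_bound {C X : Type*} [Fintype C] [Fintype X]
    (pr q : C × X → ℝ)
    (hpr0 : ∀ p, 0 ≤ pr p) (hpr1 : ∑ p, pr p = 1)
    (hq0 : ∀ p, 0 < q p) (hq1 : ∑ p, q p = 1)
    (cs cq : X → C)
    (hcs : ∀ x c, pr (c, x) ≤ pr (cs x, x))
    (hcq : ∀ x c, q (c, x) ≤ q (cq x, x)) :
    ∑ x ∈ Finset.univ.filter (fun x => 0 < ∑ c, pr (c, x)),
      (∑ c, pr (c, x)) *
        ∑ c, (pr (c, x) / ∑ c', pr (c', x)) *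
          Real.log ((pr (c, x) / ∑ c', pr (c', x)) / (q (c, x) / ∑ c', q (c', x)))
      ≥ B (∑ x, (pr (cs x, x) - pr (cq x, x))) := by
  classical
  have hCne : Nonempty C := by
    by_contra h
    rw [not_nonempty_iff] at h
    haveI : IsEmpty (C × X) := ⟨fun p => (h.false p.1).elim⟩
    rw [Finset.univ_eq_empty, Finset.sum_empty] at hpr1
    norm_num at hpr1
  -- marginals
  have hprx0 : ∀ x, (0:ℝ) ≤ ∑ c, pr (c, x) :=
    fun x => Finset.sum_nonneg fun c _ => hpr0 (c, x)
  have hqxpos : ∀ x, (0:ℝ) < ∑ c, q (c, x) :=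
    fun x => Finset.sum_pos (fun c _ => hq0 (c, x)) Finset.univ_nonempty
  have hprx1 : ∑ x, ∑ c, pr (c, x) = 1 := by
    rw [← hpr1, Fintype.sum_prod_type]
    exact (Finset.sum_comm).symm

  -- T and weights
  set T := Finset.univ.filter (fun x : X => 0 < ∑ c, pr (c, x)) with hT
  have hw1 : ∑ x ∈ T, ∑ c, pr (c, x) = 1 := by
    rw [hT, Finset.sum_filter_of_ne, hprx1]
    intro x _ hne
    exact lt_of_le_of_ne (hprx0 x) (Ne.symm hne)
  -- each pr(c,x) ≤ marginal
  have hsingle : ∀ (c : C) (x : X), pr (c, x) ≤ ∑ c', pr (c', x) := by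
    intro c x
    exact Finset.single_le_sum (fun c' _ => hpr0 (c', x)) (Finset.mem_univ c)
  have hδ0 : ∀ x, (0:ℝ) ≤ pr (cs x, x) - pr (cq x, x) :=
    fun x => sub_nonneg.2 (hcs x (cq x))
  -- z in Icc
  set z : X → ℝ := fun x => (pr (cs x, x) - pr (cq x, x)) / ∑ c, pr (c, x) with hz
  have hzmem : ∀ x ∈ T, z x ∈ Set.Icc (-1:ℝ) 1 := by
    intro x hx
    rw [hT, Finset.mem_filter] at hx
    have hp := hx.2
    constructor
    · have : 0 ≤ z x := div_nonneg (hδ0 x) (le_of_lt hp)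
      linarith
    · rw [hz]
      rw [div_le_one hp]
      have := hsingle (cs x) x
      have := hpr0 (cq x, x)
      linarith
  -- weighted sum of z equals Δ
  have hsumz : ∑ x ∈ T, (∑ c, pr (c, x)) • z x = ∑ x, (pr (cs x, x) - pr (cq x, x)) := by
    have h1 : ∀ x ∈ T, (∑ c, pr (c, x)) • z x = pr (cs x, x) - pr (cq x, x) := by
      intro x hx
      rw [hT, Finset.mem_filter] at hx
      rw [hz, smul_eq_mul]
      have hne : (∑ c, pr (c, x)) ≠ 0 := ne_of_gt hx.2
      dsimp only
      rw [mul_comm, div_mul_eq_mul_div, mul_div_assoc, div_self hne, mul_one]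
    rw [Finset.sum_congr rfl h1]
    rw [hT, Finset.sum_filter_of_ne]
    intro x _ hne
    have h2 : 0 < pr (cs x, x) := by
      rcases lt_or_eq_of_le (hδ0 x) with h | h
      · have := hpr0 (cq x, x); linarith
      · exact absurd h.symm hne
    exact lt_of_lt_of_le h2 (hsingle (cs x) x)
  -- Jensen
  have hjensen := convexOn_B.map_sum_le (t := T) (w := fun x => ∑ c, pr (c, x))
    (p := z) (fun x _ => hprx0 x) hw1 hzmem
  rw [hsumz] at hjensen
  -- per-x bound
  have hperx : ∀ x ∈ T, B (z x) ≤
      ∑ c, (pr (c, x) / ∑ c', pr (c', x)) *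
        Real.log ((pr (c, x) / ∑ c', pr (c', x)) / (q (c, x) / ∑ c', q (c', x))) := by
    intro x hx
    rw [hT, Finset.mem_filter] at hx
    have hp := hx.2
    have hq := hqxpos x
    have key := kl_ge_B (fun c => pr (c, x) / ∑ c', pr (c', x))
      (fun c => q (c, x) / ∑ c', q (c', x))
      (fun c => div_nonneg (hpr0 (c, x)) (le_of_lt hp))
      (by rw [← Finset.sum_div]; exact div_self (ne_of_gt hp))
      (fun c => div_pos (hq0 (c, x)) hq)
      (by rw [← Finset.sum_div]; exact div_self (ne_of_gt hq))
      (cs x) (cq x)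
      (fun c => by
        show pr (c, x) / _ ≤ pr (cs x, x) / _
        exact (div_le_div_iff_of_pos_right hp).2 (hcs x c))
      (fun c => by
        show q (c, x) / _ ≤ q (cq x, x) / _
        exact (div_le_div_iff_of_pos_right hq).2 (hcq x c))
    have hzz : z x = pr (cs x, x) / (∑ c', pr (c', x)) - pr (cq x, x) / (∑ c', pr (c', x)) := by
      simp only [hz]
      rw [sub_div]
    rw [hzz]
    exact key
  calc B (∑ x, (pr (cs x, x) - pr (cq x, x)))
      ≤ ∑ x ∈ T, (∑ c, pr (c, x)) • B (z x) := hjensen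
    _ ≤ _ := by
        apply Finset.sum_le_sum
        intro x hx
        rw [smul_eq_mul]
        exact mul_le_mul_of_nonneg_left (hperx x hx) (hprx0 x)
end

section
/- The joint Kullback-Leibler divergence is lower-bounded by B applied to the global error mismatch: D_KL(pr‖q) ≥ B(Δ_q). -/
private lemma mul_log_div_eq (x y : ℝ) (hx : 0 ≤ x) (hy : 0 < y) :
    x * Real.log (x / y) = x * Real.log x - x * Real.log y := by
  rcases eq_or_lt_of_le hx with h | h
  · simp [← h]
  · rw [Real.log_div (ne_of_gt h) (ne_of_gt hy)]; ring

/-- Log-sum inequality. -/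
private lemma log_sum_ineq {ι : Type*} (s : Finset ι) (t u : ι → ℝ)
    (ht : ∀ i ∈ s, 0 ≤ t i) (hu : ∀ i ∈ s, 0 ≤ u i)
    (htu : ∀ i ∈ s, u i = 0 → t i = 0) (hU : 0 < ∑ i ∈ s, u i) :
    (∑ i ∈ s, t i) * Real.log ((∑ i ∈ s, t i) / (∑ i ∈ s, u i))
      ≤ ∑ i ∈ s, t i * Real.log (t i / u i) := by
  set T := ∑ i ∈ s, t i with hT
  set U := ∑ i ∈ s, u i with hUdef
  have hT0 : 0 ≤ T := Finset.sum_nonneg ht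
  rcases eq_or_lt_of_le hT0 with h0 | hTpos
  · have hz : ∀ i ∈ s, t i = 0 := by
      intro i hi
      have := (Finset.sum_eq_zero_iff_of_nonneg ht).1 h0.symm
      exact this i hi
    have : (∑ i ∈ s, t i * Real.log (t i / u i)) = 0 :=
      Finset.sum_eq_zero fun i hi => by rw [hz i hi]; ring
    rw [this, ← h0]; simp
  · have key : ∀ i ∈ s, t i * Real.log (T / U) + (t i - u i * (T / U))
        ≤ t i * Real.log (t i / u i) := by
      intro i hi
      rcases eq_or_lt_of_le (hu i hi) with hu0 | hupos
      · have ht0' : t i = 0 := htu i hi hu0.symm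
        rw [ht0', ← hu0]; simp
      rcases eq_or_lt_of_le (ht i hi) with ht0' | htpos
      · rw [← ht0']
        have : 0 ≤ u i * (T / U) := le_of_lt (mul_pos hupos (div_pos hTpos hU))
        simp only [zero_mul, zero_add, zero_sub]
        linarith
      · -- t i > 0, u i > 0
        have hx : 0 < u i * T / (t i * U) := by positivity
        have hlog := Real.log_le_sub_one_of_pos hx
        have hexp : Real.log (u i * T / (t i * U))
            = Real.log (u i) + Real.log T - Real.log (t i) - Real.log U := by
          rw [Real.log_div (by positivity) (by positivity),
            Real.log_mul (ne_of_gt hupos) (ne_of_gt hTpos),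
            Real.log_mul (ne_of_gt htpos) (ne_of_gt hU)]
          ring
        have h1 : Real.log (t i / u i) = Real.log (t i) - Real.log (u i) :=
          Real.log_div (ne_of_gt htpos) (ne_of_gt hupos)
        have h2 : Real.log (T / U) = Real.log T - Real.log U :=
          Real.log_div (ne_of_gt hTpos) (ne_of_gt hU)
        rw [hexp] at hlog
        have hval : u i * T / (t i * U) - 1
            = (u i * (T / U) - t i) / t i := by
          field_simp
        rw [hval] at hlog
        have hmul := mul_le_mul_of_nonneg_left hlog (le_of_lt htpos)
        rw [mul_div_cancel₀ _ (ne_of_gt htpos)] at hmul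
        rw [h1, h2]
        nlinarith [hmul]
    have hsum := Finset.sum_le_sum key
    have hleft : (∑ i ∈ s, (t i * Real.log (T / U) + (t i - u i * (T / U))))
        = T * Real.log (T / U) := by
      rw [Finset.sum_add_distrib, Finset.sum_sub_distrib, ← Finset.sum_mul,
        ← Finset.sum_mul, ← hT, ← hUdef]
      field_simp
      ring
    rw [hleft] at hsum
    exact hsum

/-- splitting a KL term with a test value `t ∈ [0,1]`. -/
private lemma split_term (t x y : ℝ) (hx : 0 ≤ x) (ht0 : 0 ≤ t) (ht1 : t ≤ 1) (hy : 0 < y) :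
    x * Real.log (x / y)
      = (t * x) * Real.log ((t * x) / (t * y))
        + ((1 - t) * x) * Real.log (((1 - t) * x) / ((1 - t) * y)) := by
  have key : ∀ s : ℝ, 0 < s →
      (s * x) * Real.log ((s * x) / (s * y)) = s * (x * Real.log (x / y)) := by
    intro s hs
    rw [mul_div_mul_left _ _ (ne_of_gt hs)]; ring
  rcases eq_or_lt_of_le ht0 with h | h
  · rw [← h]; norm_num
  rcases eq_or_lt_of_le ht1 with h1 | h1
  · rw [h1]; norm_num
  · rw [key t h, key (1 - t) (by linarith)]; ring

/-- the final scalar inequality: `kl(a‖b) ≥ B(2a−1)` when `1/2 ≤ a ≤ 1`, `0 < b ≤ 1/2`. -/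
private lemma kl_ge_B_s4 (a b : ℝ) (ha1 : 1 / 2 ≤ a) (ha2 : a ≤ 1) (hb0 : 0 < b)
    (hb1 : b ≤ 1 / 2) :
    B (2 * a - 1) ≤ a * Real.log (a / b) + (1 - a) * Real.log ((1 - a) / (1 - b)) := by
  have h1b : 0 < 1 - b := by linarith
  have ha0 : 0 < a := by linarith
  have h1a : 0 ≤ 1 - a := by linarith
  rw [mul_log_div_eq a b ha0.le hb0, mul_log_div_eq (1 - a) (1 - b) h1a h1b]
  -- AM-GM step
  have geo : b ^ a * (1 - b) ^ (1 - a) ≤ a * b + (1 - a) * (1 - b) :=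
    Real.geom_mean_le_arith_mean2_weighted ha0.le h1a hb0.le h1b.le (by ring)
  have hmid : a * b + (1 - a) * (1 - b) ≤ 1 / 2 := by
    nlinarith [mul_nonneg (by linarith : (0:ℝ) ≤ 2 * a - 1) (by linarith : (0:ℝ) ≤ 1 - 2 * b)]
  have hgpos : 0 < b ^ a * (1 - b) ^ (1 - a) :=
    mul_pos (Real.rpow_pos_of_pos hb0 a) (Real.rpow_pos_of_pos h1b (1 - a))
  have hlog : a * Real.log b + (1 - a) * Real.log (1 - b) ≤ - Real.log 2 := by
    have h := (Real.log_le_log_iff hgpos (by norm_num : (0:ℝ) < 1/2)).2 (geo.trans hmid)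
    rw [Real.log_mul (ne_of_gt (Real.rpow_pos_of_pos hb0 a))
        (ne_of_gt (Real.rpow_pos_of_pos h1b (1 - a))),
      Real.log_rpow hb0, Real.log_rpow h1b] at h
    rw [show (1:ℝ)/2 = 2⁻¹ by norm_num, Real.log_inv] at h
    linarith
  -- B identity
  have hB : B (2 * a - 1) = a * Real.log a + (1 - a) * Real.log (1 - a) + Real.log 2 := by
    unfold B
    rcases eq_or_lt_of_le ha2 with h | h
    · rw [h]; norm_num [Real.log_zero]
    · have h1a' : 0 < 1 - a := by linarith
      have e1 : (1 : ℝ) + (2 * a - 1) = 2 * a := by ring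
      have e2 : (1 : ℝ) - (2 * a - 1) = 2 * (1 - a) := by ring
      rw [e1, e2, Real.log_mul (by norm_num) (ne_of_gt ha0),
        Real.log_mul (by norm_num) (ne_of_gt h1a')]
      ring
  rw [hB]
  linarith

/-- The joint KL divergence is lower-bounded by `B` of the global error mismatch:
`D_KL(pr‖q) := ∑_{c,x} pr(c,x)·log(pr(c,x)/q(c,x)) ≥ B(Δ_q)` where
`Δ_q := ∑_x (pr(c_*^x,x) − pr(c_q^x,x))`. Terms with `pr(c,x) = 0` contribute `0`. -/
theorem joint_kl_divergence_bound {C X : Type*} [Fintype C] [Fintype X]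
    (pr q : C × X → ℝ)
    (hpr0 : ∀ p, 0 ≤ pr p) (hpr1 : ∑ p, pr p = 1)
    (hq0 : ∀ p, 0 < q p) (hq1 : ∑ p, q p = 1)
    (cs cq : X → C)
    (hcs : ∀ x c, pr (c, x) ≤ pr (cs x, x))
    (hcq : ∀ x c, q (c, x) ≤ q (cq x, x)) :
    ∑ c, ∑ x, pr (c, x) * Real.log (pr (c, x) / q (c, x))
      ≥ B (∑ x, (pr (cs x, x) - pr (cq x, x))) := by
  classical
  -- the randomized test
  set f : C × X → ℝ := fun p =>
    (1 + (if p.1 = cs p.2 then (1:ℝ) else 0) - (if p.1 = cq p.2 then (1:ℝ) else 0)) / 2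
    with hf
  have hf0 : ∀ p, 0 ≤ f p := by
    intro p; simp only [hf]; split_ifs <;> norm_num
  have hf1 : ∀ p, f p ≤ 1 := by
    intro p; simp only [hf]; split_ifs <;> norm_num
  set Δ : ℝ := ∑ x, (pr (cs x, x) - pr (cq x, x)) with hΔ
  -- sums of indicator-weighted functions
  have hind : ∀ (r : C × X → ℝ) (d : X → C),
      ∑ p : C × X, (if p.1 = d p.2 then (1:ℝ) else 0) * r p = ∑ x, r (d x, x) := by
    intro r d
    rw [Fintype.sum_prod_type_right]
    refine Finset.sum_congr rfl fun x _ => ?_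
    simp
  -- expectation of f under pr and q
  have hfsum : ∀ r : C × X → ℝ,
      ∑ p : C × X, f p * r p
        = (∑ p, r p + ∑ x, r (cs x, x) - ∑ x, r (cq x, x)) / 2 := by
    intro r
    have : ∀ p : C × X, f p * r p
        = (r p + (if p.1 = cs p.2 then (1:ℝ) else 0) * r p
            - (if p.1 = cq p.2 then (1:ℝ) else 0) * r p) / 2 := by
      intro p; simp only [hf]; ring
    rw [Finset.sum_congr rfl fun p _ => this p, ← Finset.sum_div,
      Finset.sum_sub_distrib, Finset.sum_add_distrib, hind r cs, hind r cq]
  have hfpr : ∑ p : C × X, f p * pr p = (1 + Δ) / 2 := by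
    rw [hfsum pr, hpr1, hΔ, Finset.sum_sub_distrib]
    ring
  have hfq : ∑ p : C × X, f p * q p
      = (1 + (∑ x, q (cs x, x) - ∑ x, q (cq x, x))) / 2 := by
    rw [hfsum q, hq1]; ring
  set a : ℝ := (1 + Δ) / 2 with hadef
  set b : ℝ := ∑ p : C × X, f p * q p with hbdef
  -- bounds on Δ
  have hΔ0 : 0 ≤ Δ := by
    rw [hΔ]
    exact Finset.sum_nonneg fun x _ => sub_nonneg.2 (hcs x (cq x))
  have hEsum : ∑ x, pr (cs x, x) ≤ 1 := by
    rw [← hpr1, ← hind pr cs]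
    refine Finset.sum_le_sum fun p _ => ?_
    rcases le_or_gt ((if p.1 = cs p.2 then (1:ℝ) else 0)) 1 with h | h
    · split_ifs with hh
      · simp
      · simp [hpr0 p]
    · split_ifs at h <;> norm_num at h
  have hΔ1 : Δ ≤ 1 := by
    have : Δ ≤ ∑ x, pr (cs x, x) := by
      rw [hΔ, Finset.sum_sub_distrib]
      have : 0 ≤ ∑ x, pr (cq x, x) :=
        Finset.sum_nonneg fun x _ => hpr0 _
      linarith
    linarith
  have ha1 : 1 / 2 ≤ a := by rw [hadef]; linarith
  have ha2 : a ≤ 1 := by rw [hadef]; linarith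
  -- bounds on b
  have hb1 : b ≤ 1 / 2 := by
    rw [hfq]
    have : ∑ x, q (cs x, x) ≤ ∑ x, q (cq x, x) :=
      Finset.sum_le_sum fun x _ => hcq x (cs x)
    linarith
  have hne : Nonempty (C × X) := by
    rcases isEmpty_or_nonempty (C × X) with h | h
    · rw [Finset.univ_eq_empty, Finset.sum_empty] at hpr1
      norm_num at hpr1
    · exact h
  obtain ⟨⟨c₀, x₀⟩⟩ := hne
  have hb0 : 0 < b := by
    have hmem : ((cs x₀, x₀) : C × X) ∈ (Finset.univ : Finset (C × X)) :=
      Finset.mem_univ _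
    have hterm : (0:ℝ) < f (cs x₀, x₀) * q (cs x₀, x₀) := by
      have hfv : (1:ℝ)/2 ≤ f (cs x₀, x₀) := by
        simp only [hf]
        split_ifs <;> norm_num
      exact mul_pos (lt_of_lt_of_le (by norm_num) hfv) (hq0 _)
    have hble := Finset.single_le_sum
      (f := fun p : C × X => f p * q p)
      (fun p _ => mul_nonneg (hf0 p) (hq0 p).le) hmem
    rw [hbdef]
    exact lt_of_lt_of_le hterm hble
  have h1b : 0 < 1 - b := by linarith
  -- rewrite the double sum
  have hdd : ∑ c, ∑ x, pr (c, x) * Real.log (pr (c, x) / q (c, x))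
      = ∑ p : C × X, pr p * Real.log (pr p / q p) := by
    rw [Fintype.sum_prod_type]
  -- splitting
  have hsplit : ∑ p : C × X, pr p * Real.log (pr p / q p)
      = ∑ p : C × X, (f p * pr p) * Real.log ((f p * pr p) / (f p * q p))
        + ∑ p : C × X, ((1 - f p) * pr p) * Real.log (((1 - f p) * pr p) / ((1 - f p) * q p)) := by
    rw [← Finset.sum_add_distrib]
    exact Finset.sum_congr rfl fun p _ =>
      split_term (f p) (pr p) (q p) (hpr0 p) (hf0 p) (hf1 p) (hq0 p)
  -- log-sum inequality applications
  have hsum1a : ∑ p : C × X, (1 - f p) * pr p = 1 - a := by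
    have : ∀ p : C × X, (1 - f p) * pr p = pr p - f p * pr p := fun p => by ring
    rw [Finset.sum_congr rfl fun p _ => this p, Finset.sum_sub_distrib, hpr1, hfpr]
  have hsum1b : ∑ p : C × X, (1 - f p) * q p = 1 - b := by
    have : ∀ p : C × X, (1 - f p) * q p = q p - f p * q p := fun p => by ring
    rw [Finset.sum_congr rfl fun p _ => this p, Finset.sum_sub_distrib, hq1, hbdef]
  have hls1 := log_sum_ineq Finset.univ (fun p : C × X => f p * pr p) (fun p => f p * q p)
    (fun p _ => mul_nonneg (hf0 p) (hpr0 p))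
    (fun p _ => mul_nonneg (hf0 p) (hq0 p).le)
    (fun p _ hz => by
      have : f p = 0 := by
        rcases mul_eq_zero.1 hz with h | h
        · exact h
        · exact absurd h (ne_of_gt (hq0 p))
      show f p * pr p = 0
      rw [this]; ring)
    (by rw [← hbdef]; exact hb0)
  have hls2 := log_sum_ineq Finset.univ (fun p : C × X => (1 - f p) * pr p)
    (fun p => (1 - f p) * q p)
    (fun p _ => mul_nonneg (by linarith [hf1 p]) (hpr0 p))
    (fun p _ => mul_nonneg (by linarith [hf1 p]) (hq0 p).le)
    (fun p _ hz => by
      have : 1 - f p = 0 := by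
        rcases mul_eq_zero.1 hz with h | h
        · exact h
        · exact absurd h (ne_of_gt (hq0 p))
      show (1 - f p) * pr p = 0
      rw [this]; ring)
    (by rw [hsum1b]; exact h1b)
  rw [hfpr, ← hbdef] at hls1
  rw [hsum1a, hsum1b] at hls2
  -- conclude
  have hfinal := kl_ge_B_s4 a b ha1 ha2 hb0 hb1
  have haΔ : 2 * a - 1 = Δ := by rw [hadef]; ring
  rw [haΔ] at hfinal
  rw [ge_iff_le, hdd, hsplit]
  calc B Δ ≤ a * Real.log (a / b) + (1 - a) * Real.log ((1 - a) / (1 - b)) := hfinal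
    _ ≤ _ := add_le_add hls1 hls2
end

section
/- Refined bound under a Bayes-error constraint: let 0 < t < 1/2 and assume E_* ≤ t. If Δ_q ∈ [0, 1−2t) then D_KL(pr‖q) ≥ (Δ_q + 2t)·B(Δ_q/(Δ_q + 2t)); if Δ_q ∈ [1−2t, 1] then D_KL(pr‖q) ≥ B(Δ_q). -/
private lemma sub_le_mul_log' {a b : ℝ} (ha : 0 ≤ a) (hb : 0 < b) :
    a - b ≤ a * Real.log (a / b) := by
  rcases eq_or_lt_of_le ha with h | h
  · simp [← h]; linarith
  · have hba : 0 < b / a := div_pos hb h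
    have h1 := Real.log_le_sub_one_of_pos hba
    have h2 : Real.log (a / b) = - Real.log (b / a) := by
      rw [← Real.log_inv, inv_div]
    have h3 : a * Real.log (b / a) ≤ a * (b / a - 1) :=
      mul_le_mul_of_nonneg_left h1 h.le
    have h4 : a * (b / a) = b := by field_simp
    rw [h2]
    nlinarith

private lemma logsum' {ι : Type*} (s : Finset ι) (p q : ι → ℝ)
    (hp : ∀ i ∈ s, 0 ≤ p i) (hq : ∀ i ∈ s, 0 ≤ q i)
    (h0 : ∀ i ∈ s, q i = 0 → p i = 0) :
    (∑ i ∈ s, p i) * Real.log ((∑ i ∈ s, p i) / (∑ i ∈ s, q i)) ≤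
      ∑ i ∈ s, p i * Real.log (p i / q i) := by
  rcases eq_or_lt_of_le (Finset.sum_nonneg hp) with hP0 | hP0
  · have hpz := (Finset.sum_eq_zero_iff_of_nonneg hp).mp hP0.symm
    rw [← hP0, zero_mul]
    refine Finset.sum_nonneg (fun i hi => ?_)
    rw [hpz i hi]; simp
  · have hQ0 : 0 < ∑ i ∈ s, q i := by
      rcases eq_or_lt_of_le (Finset.sum_nonneg hq) with hQ | hQ
      · exfalso
        have hqz := (Finset.sum_eq_zero_iff_of_nonneg hq).mp hQ.symm
        have : ∀ i ∈ s, p i = 0 := fun i hi => h0 i hi (hqz i hi)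
        rw [Finset.sum_eq_zero this] at hP0
        exact lt_irrefl _ hP0
      · exact hQ
    set P := ∑ i ∈ s, p i
    set Q := ∑ i ∈ s, q i
    have key : ∀ i ∈ s, p i - q i * (P / Q) ≤
        p i * Real.log (p i / q i) - p i * Real.log (P / Q) := by
      intro i hi
      rcases eq_or_lt_of_le (hp i hi) with h | h
      · have hnn : 0 ≤ q i * (P / Q) := mul_nonneg (hq i hi) (le_of_lt (div_pos hP0 hQ0))
        rw [← h]
        simp only [zero_sub, zero_mul, sub_zero]
        linarith
      · have hqi : 0 < q i := by
          rcases eq_or_lt_of_le (hq i hi) with h' | h'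
          · exfalso; rw [← h0 i hi h'.symm] at h; exact lt_irrefl _ h
          · exact h'
        have hb : 0 < q i * (P / Q) := by positivity
        have hkey := sub_le_mul_log' h.le hb
        have harg : p i / (q i * (P / Q)) = (p i / q i) / (P / Q) := (div_div _ _ _).symm
        rw [harg, Real.log_div (by positivity) (by positivity), mul_sub] at hkey
        exact hkey
    have hsum := Finset.sum_le_sum key
    rw [Finset.sum_sub_distrib, Finset.sum_sub_distrib, ← Finset.sum_mul, ← Finset.sum_mul] at hsum
    have : Q * (P / Q) = P := by field_simp
    rw [this] at hsum
    linarith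

private noncomputable def gfun (u v : ℝ) : ℝ :=
  u * Real.log (u / ((u + v) / 2)) + v * Real.log (v / ((u + v) / 2))

private lemma gfun_superadd {ι : Type*} (s : Finset ι) (u v : ι → ℝ)
    (hu : ∀ i ∈ s, 0 ≤ u i) (hv : ∀ i ∈ s, 0 ≤ v i) :
    gfun (∑ i ∈ s, u i) (∑ i ∈ s, v i) ≤ ∑ i ∈ s, gfun (u i) (v i) := by
  have hm : ∑ i ∈ s, (u i + v i) / 2 = ((∑ i ∈ s, u i) + (∑ i ∈ s, v i)) / 2 := by
    rw [← Finset.sum_div, Finset.sum_add_distrib]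
  have hmnn : ∀ i ∈ s, 0 ≤ (u i + v i) / 2 := by
    intro i hi; have := hu i hi; have := hv i hi; linarith
  have h1 := logsum' s u (fun i => (u i + v i) / 2) hu hmnn
    (by intro i hi h; have := hv i hi; have h2 : u i + v i = 0 := by linarith
        have := hu i hi; linarith)
  have h2 := logsum' s v (fun i => (u i + v i) / 2) hv hmnn
    (by intro i hi h; have := hu i hi; have h2 : u i + v i = 0 := by linarith
        have := hv i hi; linarith)
  rw [hm] at h1 h2
  simp only [gfun]
  rw [Finset.sum_add_distrib]
  exact add_le_add h1 h2

private lemma gfun_self (e : ℝ) : gfun e e = 0 := by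
  rcases eq_or_ne e 0 with h | h
  · simp [gfun, h]
  · have h2 : (e + e) / 2 = e := by ring
    simp [gfun, h2, div_self h]

private lemma gfun_add {a b c d : ℝ} (ha : 0 ≤ a) (hb : 0 ≤ b) (hc : 0 ≤ c) (hd : 0 ≤ d) :
    gfun (a + c) (b + d) ≤ gfun a b + gfun c d := by
  have := gfun_superadd (Finset.univ : Finset (Fin 2)) ![a, c] ![b, d]
    (by intro i _; fin_cases i <;> simpa) (by intro i _; fin_cases i <;> simpa)
  simpa [Fin.sum_univ_two] using this

private lemma one_sub_le_log {a b : ℝ} (ha : 0 < a) (hb : 0 < b) :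
    1 - b / a ≤ Real.log (a / b) := by
  have h := Real.log_le_sub_one_of_pos (div_pos hb ha)
  have h2 : Real.log (a / b) = - Real.log (b / a) := by rw [← Real.log_inv, inv_div]
  rw [h2]; linarith

private lemma hx_bound {u v qs qc : ℝ} (hv : 0 ≤ v) (hvu : v ≤ u)
    (hqs : 0 < qs) (hqc : qs ≤ qc) :
    gfun u v ≤ (u * Real.log (u / qs) - u + qs) + (v * Real.log (v / qc) - v + qc) := by
  have hu : 0 ≤ u := le_trans hv hvu
  rcases eq_or_lt_of_le hu with h0 | hupos
  · have hv0 : v = 0 := le_antisymm (h0 ▸ hvu) hv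
    rw [← h0, hv0]
    simp [gfun]
    linarith
  · have hm : 0 < (u + v) / 2 := by linarith
    have hqcpos : 0 < qc := lt_of_lt_of_le hqs hqc
    have e1 : u * Real.log (u / qs) - u * Real.log (u / ((u + v) / 2))
        = u * Real.log (((u + v) / 2) / qs) := by
      rw [← mul_sub, ← Real.log_div (div_pos hupos hqs).ne' (div_pos hupos hm).ne']
      congr 2
      field_simp
    have e2 : v * Real.log (v / qc) - v * Real.log (v / ((u + v) / 2))
        = v * Real.log (((u + v) / 2) / qc) := by
      rcases eq_or_lt_of_le hv with h | h
      · simp [← h]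
      · rw [← mul_sub, ← Real.log_div (div_pos h hqcpos).ne' (div_pos h hm).ne']
        congr 2
        field_simp
    have l1 : u - u * (qs / ((u + v) / 2)) ≤ u * Real.log (((u + v) / 2) / qs) := by
      have := mul_le_mul_of_nonneg_left (one_sub_le_log hm hqs) hu
      rw [mul_one_sub] at this
      linarith
    have l2 : v - v * (qc / ((u + v) / 2)) ≤ v * Real.log (((u + v) / 2) / qc) := by
      have := mul_le_mul_of_nonneg_left (one_sub_le_log hm hqcpos) hv
      rw [mul_one_sub] at this
      linarith
    have key : u * (qs / ((u + v) / 2)) + v * (qc / ((u + v) / 2)) ≤ qs + qc := by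
      rw [← mul_div_assoc, ← mul_div_assoc, ← add_div, div_le_iff₀ hm]
      nlinarith [mul_nonneg (sub_nonneg.2 hvu) (sub_nonneg.2 hqc)]
    simp only [gfun]
    linarith

/-- Refined bound with constrained Bayes error: let `0 < t < 1/2` and `E_* ≤ t`.
If `Δ_q ∈ [0, 1−2t)` then `D_KL(pr‖q) ≥ (Δ_q + 2t)·B(Δ_q/(Δ_q + 2t))`;
if `Δ_q ∈ [1−2t, 1]` then `D_KL(pr‖q) ≥ B(Δ_q)`.
Here `Δ_q := ∑_x (pr(c_*^x,x) − pr(c_q^x,x))` and `E_* := 1 − ∑_x pr(c_*^x,x)`. -/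
theorem refined_kl_bound_constrained_bayes_error {C X : Type*} [Fintype C] [Fintype X]
    (pr q : C × X → ℝ)
    (hpr0 : ∀ p, 0 ≤ pr p) (hpr1 : ∑ p, pr p = 1)
    (hq0 : ∀ p, 0 < q p) (hq1 : ∑ p, q p = 1)
    (cs cq : X → C)
    (hcs : ∀ x c, pr (c, x) ≤ pr (cs x, x))
    (hcq : ∀ x c, q (c, x) ≤ q (cq x, x))
    (t : ℝ) (ht0 : 0 < t) (ht : t < 1 / 2)
    (hE : 1 - ∑ x, pr (cs x, x) ≤ t) :
    (0 ≤ ∑ x, (pr (cs x, x) - pr (cq x, x)) →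
      ∑ x, (pr (cs x, x) - pr (cq x, x)) < 1 - 2 * t →
      ∑ c, ∑ x, pr (c, x) * Real.log (pr (c, x) / q (c, x)) ≥
        ((∑ x, (pr (cs x, x) - pr (cq x, x))) + 2 * t) *
          B ((∑ x, (pr (cs x, x) - pr (cq x, x))) /
             ((∑ x, (pr (cs x, x) - pr (cq x, x))) + 2 * t))) ∧
    (1 - 2 * t ≤ ∑ x, (pr (cs x, x) - pr (cq x, x)) →
      ∑ x, (pr (cs x, x) - pr (cq x, x)) ≤ 1 →
      ∑ c, ∑ x, pr (c, x) * Real.log (pr (c, x) / q (c, x)) ≥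
        B (∑ x, (pr (cs x, x) - pr (cq x, x)))) := by
  classical
  set Δ := ∑ x, (pr (cs x, x) - pr (cq x, x)) with hΔdef
  set T : Finset X := Finset.univ.filter (fun x => cs x ≠ cq x) with hTdef
  set U := ∑ x ∈ T, pr (cs x, x) with hUdef
  set V := ∑ x ∈ T, pr (cq x, x) with hVdef
  have hTmem : ∀ x ∈ T, cs x ≠ cq x := by
    intro x hx; rw [hTdef] at hx; exact (Finset.mem_filter.mp hx).2
  have hTnotmem : ∀ x, x ∉ T → cs x = cq x := by
    intro x hx
    by_contra h
    exact hx (by rw [hTdef]; exact Finset.mem_filter.mpr ⟨Finset.mem_univ x, h⟩)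
  -- the auxiliary function h
  set h : C × X → ℝ := fun p => pr p * Real.log (pr p / q p) - pr p + q p with hhdef
  have hh0 : ∀ p, 0 ≤ h p := by
    intro p
    have := sub_le_mul_log' (hpr0 p) (hq0 p)
    simp only [hhdef]
    linarith
  have hsum_h : ∑ p : C × X, h p = ∑ p : C × X, pr p * Real.log (pr p / q p) := by
    simp only [hhdef]
    rw [Finset.sum_add_distrib, Finset.sum_sub_distrib, hpr1, hq1]
    ring
  -- the special cells
  set E : Finset (C × X) := T.biUnion (fun x => ({(cs x, x), (cq x, x)} : Finset (C × X)))
    with hEdef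
  have hdisj : (↑T : Set X).PairwiseDisjoint
      (fun x => ({(cs x, x), (cq x, x)} : Finset (C × X))) := by
    intro x _ y _ hxy
    simp only [Function.onFun]
    rw [Finset.disjoint_left]
    rintro p hp hq'
    simp only [Finset.mem_insert, Finset.mem_singleton] at hp hq'
    rcases hp with rfl | rfl <;> rcases hq' with h' | h' <;>
      exact hxy (congrArg Prod.snd h')
  have hE2 : ∑ p ∈ E, h p = ∑ x ∈ T, (h (cs x, x) + h (cq x, x)) := by
    rw [hEdef, Finset.sum_biUnion hdisj]
    refine Finset.sum_congr rfl (fun x hx => ?_)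
    have hne : ((cs x, x) : C × X) ≠ (cq x, x) := by
      simp [Prod.ext_iff, hTmem x hx]
    rw [Finset.sum_pair hne]
  have hE1 : ∑ p ∈ E, h p ≤ ∑ p : C × X, h p :=
    Finset.sum_le_sum_of_subset_of_nonneg (Finset.subset_univ E) (fun p _ _ => hh0 p)
  have hxg : ∀ x ∈ T, gfun (pr (cs x, x)) (pr (cq x, x)) ≤ h (cs x, x) + h (cq x, x) := by
    intro x hx
    have := hx_bound (hpr0 (cq x, x)) (hcs x (cq x)) (hq0 (cs x, x)) (hcq x (cs x))
    simpa only [hhdef] using this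
  have hsuper : gfun U V ≤ ∑ x ∈ T, gfun (pr (cs x, x)) (pr (cq x, x)) :=
    gfun_superadd T _ _ (fun x _ => hpr0 _) (fun x _ => hpr0 _)
  have hKLmain : gfun U V ≤ ∑ c, ∑ x, pr (c, x) * Real.log (pr (c, x) / q (c, x)) := by
    calc gfun U V ≤ ∑ x ∈ T, gfun (pr (cs x, x)) (pr (cq x, x)) := hsuper
      _ ≤ ∑ x ∈ T, (h (cs x, x) + h (cq x, x)) := Finset.sum_le_sum hxg
      _ = ∑ p ∈ E, h p := hE2.symm
      _ ≤ ∑ p : C × X, h p := hE1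
      _ = ∑ p : C × X, pr p * Real.log (pr p / q p) := hsum_h
      _ = ∑ c, ∑ x, pr (c, x) * Real.log (pr (c, x) / q (c, x)) := Fintype.sum_prod_type _
  -- basic facts
  have hUV : U - V = Δ := by
    have h1 : ∑ x ∈ T, (pr (cs x, x) - pr (cq x, x)) = Δ := by
      rw [hΔdef]
      exact Finset.sum_subset (Finset.subset_univ T)
        (fun x _ hx => by rw [hTnotmem x hx]; ring)
    rw [← h1, hUdef, hVdef, Finset.sum_sub_distrib]
  have hw1 : ∑ x, ∑ c, pr (c, x) = 1 := by
    rw [← hpr1]; exact (Fintype.sum_prod_type_right _).symm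
  have hsing : ∀ x, pr (cs x, x) ≤ ∑ c, pr (c, x) :=
    fun x => Finset.single_le_sum (fun c _ => hpr0 (c, x)) (Finset.mem_univ _)
  have hpairle : ∀ x ∈ T, pr (cs x, x) + pr (cq x, x) ≤ ∑ c, pr (c, x) := by
    intro x hx
    have h2 : ∑ c ∈ ({cs x, cq x} : Finset C), pr (c, x) ≤ ∑ c, pr (c, x) :=
      Finset.sum_le_sum_of_subset_of_nonneg (Finset.subset_univ _)
        (fun c _ _ => hpr0 (c, x))
    rwa [Finset.sum_pair (hTmem x hx)] at h2
  have hVt : V ≤ t := by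
    have h2 : V ≤ ∑ x ∈ T, (∑ c, pr (c, x) - pr (cs x, x)) := by
      rw [hVdef]
      exact Finset.sum_le_sum (fun x hx => by have := hpairle x hx; linarith)
    have h3 : ∑ x ∈ T, (∑ c, pr (c, x) - pr (cs x, x)) ≤
        ∑ x, (∑ c, pr (c, x) - pr (cs x, x)) :=
      Finset.sum_le_sum_of_subset_of_nonneg (Finset.subset_univ T)
        (fun x _ _ => by linarith [hsing x])
    have h4 : ∑ x, (∑ c, pr (c, x) - pr (cs x, x)) = 1 - ∑ x, pr (cs x, x) := by
      rw [Finset.sum_sub_distrib, hw1]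
    linarith
  have hUV1 : U + V ≤ 1 := by
    have h1 : U + V = ∑ x ∈ T, (pr (cs x, x) + pr (cq x, x)) := by
      rw [hUdef, hVdef, Finset.sum_add_distrib]
    have h2 : ∑ x ∈ T, (pr (cs x, x) + pr (cq x, x)) ≤ ∑ x ∈ T, ∑ c, pr (c, x) :=
      Finset.sum_le_sum hpairle
    have h3 : ∑ x ∈ T, ∑ c, pr (c, x) ≤ ∑ x, ∑ c, pr (c, x) :=
      Finset.sum_le_sum_of_subset_of_nonneg (Finset.subset_univ T)
        (fun x _ _ => Finset.sum_nonneg (fun c _ => hpr0 (c, x)))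
    linarith
  have hU0 : 0 ≤ U := Finset.sum_nonneg (fun x _ => hpr0 _)
  have hV0 : 0 ≤ V := Finset.sum_nonneg (fun x _ => hpr0 _)
  constructor
  · -- case 1
    intro hΔ0 hΔlt
    have ht2 : 0 < Δ + 2 * t := by linarith
    have he0 : 0 ≤ t - V := by linarith
    have hsub : gfun (U + (t - V)) (V + (t - V)) ≤ gfun U V + gfun (t - V) (t - V) :=
      gfun_add hU0 hV0 he0 he0
    have hUe : U + (t - V) = Δ + t := by linarith
    have hVe : V + (t - V) = t := by ring
    have htarget : (Δ + 2 * t) * B (Δ / (Δ + 2 * t)) = gfun (Δ + t) t := by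
      have hmm : (Δ + t + t) / 2 = (Δ + 2 * t) / 2 := by ring
      have h1 : 1 + Δ / (Δ + 2 * t) = (Δ + t) / ((Δ + 2 * t) / 2) := by
        field_simp
        ring
      have h2 : 1 - Δ / (Δ + 2 * t) = t / ((Δ + 2 * t) / 2) := by
        field_simp
        ring
      simp only [B, gfun, hmm, h1, h2]
      field_simp
    rw [ge_iff_le, htarget]
    calc gfun (Δ + t) t = gfun (U + (t - V)) (V + (t - V)) := by rw [hUe, hVe]
      _ ≤ gfun U V + gfun (t - V) (t - V) := hsub
      _ = gfun U V := by rw [gfun_self]; ring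
      _ ≤ _ := hKLmain
  · -- case 2
    intro hD1 hD2
    have hΔ0 : 0 ≤ Δ := by linarith
    have he0 : 0 ≤ (1 - (U + V)) / 2 := by linarith
    have hsub := gfun_add hU0 hV0 he0 he0
    have hUe : U + (1 - (U + V)) / 2 = (1 + Δ) / 2 := by linarith
    have hVe : V + (1 - (U + V)) / 2 = (1 - Δ) / 2 := by linarith
    have htarget : B Δ = gfun ((1 + Δ) / 2) ((1 - Δ) / 2) := by
      have hmm : ((1 + Δ) / 2 + (1 - Δ) / 2) / 2 = (1 : ℝ) / 2 := by ring
      have e1 : ((1 + Δ) / 2) / ((1 : ℝ) / 2) = 1 + Δ := by ring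
      have e2 : ((1 - Δ) / 2) / ((1 : ℝ) / 2) = 1 - Δ := by ring
      simp only [B, gfun, hmm, e1, e2]
      ring
    rw [ge_iff_le, htarget]
    calc gfun ((1 + Δ) / 2) ((1 - Δ) / 2)
        = gfun (U + (1 - (U + V)) / 2) (V + (1 - (U + V)) / 2) := by rw [hUe, hVe]
      _ ≤ gfun U V + gfun ((1 - (U + V)) / 2) ((1 - (U + V)) / 2) := hsub
      _ = gfun U V := by rw [gfun_self]; ring
      _ ≤ _ := hKLmain
end

section
/- If t < 1/2, the Bayes error satisfies E_* ≤ t, and the global error mismatch satisfies Δ_q < 1 − 2t, then there exists at least one observation x₀ with pr(x₀) > 0 such that the Bayes decision and the model-based decision agree at x₀, i.e., c_*^{x₀} = c_q^{x₀}. -/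
/-- If `t < 1/2`, `E_* ≤ t` and `Δ_q < 1 − 2t`, there exists an observation `x₀`
with `pr(x₀) > 0` on which the Bayes and model-based decisions agree.
Here `pr(x) := ∑_c pr(c,x)`, `Δ_q := ∑_x (pr(c_*^x,x) − pr(c_q^x,x))` and
`E_* := 1 - ∑_x pr(c_*^x,x)`. -/
theorem exists_agreeing_observation {C X : Type*} [Fintype C] [Fintype X]
    (pr q : C × X → ℝ)
    (hpr0 : ∀ p, 0 ≤ pr p) (hpr1 : ∑ p, pr p = 1)
    (hq0 : ∀ p, 0 ≤ q p) (hq1 : ∑ p, q p = 1)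
    (cs cq : X → C)
    (hcs : ∀ x c, pr (c, x) ≤ pr (cs x, x))
    (hcq : ∀ x c, q (c, x) ≤ q (cq x, x))
    (t : ℝ) (ht : t < 1 / 2)
    (hE : 1 - ∑ x, pr (cs x, x) ≤ t)
    (hΔ : ∑ x, (pr (cs x, x) - pr (cq x, x)) < 1 - 2 * t) :
    ∃ x₀, 0 < ∑ c, pr (c, x₀) ∧ cs x₀ = cq x₀ := by
  classical
  by_contra hcon
  push_neg at hcon
  have hkey : ∀ x, pr (cs x, x) + pr (cq x, x) ≤ ∑ c, pr (c, x) := by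
    intro x
    rcases le_or_gt (∑ c, pr (c, x)) 0 with h | h
    · have hz : ∀ c, pr (c, x) = 0 := by
        intro c
        have hnn : (0:ℝ) ≤ ∑ c, pr (c, x) :=
          Finset.sum_nonneg (fun c _ => hpr0 (c, x))
        have hall := (Finset.sum_eq_zero_iff_of_nonneg
          (fun c _ => hpr0 (c, x))).mp (le_antisymm h hnn)
        exact hall c (Finset.mem_univ c)
      simp [hz]
    · have hne : cs x ≠ cq x := hcon x h
      calc pr (cs x, x) + pr (cq x, x) = ∑ c ∈ ({cs x, cq x} : Finset C), pr (c, x) := by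
            rw [Finset.sum_pair hne]
        _ ≤ ∑ c, pr (c, x) := Finset.sum_le_sum_of_subset_of_nonneg
            (Finset.subset_univ _) (fun c _ _ => hpr0 (c, x))
  have htot : ∑ x, ∑ c, pr (c, x) = 1 := by
    rw [← hpr1, Fintype.sum_prod_type, Finset.sum_comm]
  have hsum : ∑ x, (pr (cs x, x) + pr (cq x, x)) ≤ 1 := by
    rw [← htot]; exact Finset.sum_le_sum (fun x _ => hkey x)
  have hS : 1 - t ≤ ∑ x, pr (cs x, x) := by linarith
  have : 1 - 2 * t ≤ ∑ x, (pr (cs x, x) - pr (cq x, x)) := by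
    have h1 : ∑ x, (pr (cs x, x) - pr (cq x, x))
        = 2 * (∑ x, pr (cs x, x)) - ∑ x, (pr (cs x, x) + pr (cq x, x)) := by
      rw [Finset.mul_sum, ← Finset.sum_sub_distrib]
      apply Finset.sum_congr rfl
      intros; ring
    rw [h1]; linarith
  linarith
end

section
/- Lower bound on the renormalized error mismatch: under the stated hypotheses, the renormalized mismatch Δ̃_q(x₀) := (1/(1−pr(x₀))) · ∑_{x ≠ x₀} pr(x)·Δ_q(x) satisfies Δ̃_q(x₀) ≥ Δ_q · (1 + (1 − 2t − Δ_q)/(2(t − E{e_*|x₀}) + Δ_q)) ≥ Δ_q/(2t + Δ_q). -/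
/-- Lower bound on the renormalized error mismatch
`Δ̃_q(x₀) := (1/(1−pr(x₀))) · ∑_{x ≠ x₀} pr(x)·Δ_q(x)` where
`Δ_q(x) := (pr(c_*^x,x) − pr(c_q^x,x))/pr(x)` and the local Bayes error at `x₀` is
`E{e_*|x₀} := 1 − pr(c_*^{x₀},x₀)/pr(x₀)`:
`Δ̃_q(x₀) ≥ Δ_q·(1 + (1 − 2t − Δ_q)/(2(t − E{e_*|x₀}) + Δ_q)) ≥ Δ_q/(2t + Δ_q)`. -/
theorem renormalized_mismatch_lower_bound {C X : Type*} [Fintype C] [Fintype X] [DecidableEq X]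
    (pr q : C × X → ℝ)
    (hpr0 : ∀ p, 0 ≤ pr p) (hpr1 : ∑ p, pr p = 1)
    (hq0 : ∀ p, 0 ≤ q p) (hq1 : ∑ p, q p = 1)
    (cs cq : X → C)
    (hcs : ∀ x c, pr (c, x) ≤ pr (cs x, x))
    (hcq : ∀ x c, q (c, x) ≤ q (cq x, x))
    (t : ℝ) (ht : t < 1 / 2)
    (hE : 1 - ∑ x, pr (cs x, x) ≤ t)
    (hΔpos : 0 < ∑ x, (pr (cs x, x) - pr (cq x, x)))
    (hΔ : ∑ x, (pr (cs x, x) - pr (cq x, x)) < 1 - 2 * t)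
    (x₀ : X) (hx₀pos : 0 < ∑ c, pr (c, x₀)) (hx₀lt : ∑ c, pr (c, x₀) < 1)
    (hx₀eq : cs x₀ = cq x₀)
    (hdisagree : ∀ x, x ≠ x₀ → 0 < ∑ c, pr (c, x) → cs x ≠ cq x) :
    (1 / (1 - ∑ c, pr (c, x₀))) *
        ∑ x ∈ Finset.univ.erase x₀,
          (∑ c, pr (c, x)) * ((pr (cs x, x) - pr (cq x, x)) / ∑ c, pr (c, x)) ≥
      (∑ x, (pr (cs x, x) - pr (cq x, x))) *
        (1 + (1 - 2 * t - ∑ x, (pr (cs x, x) - pr (cq x, x))) /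
          (2 * (t - (1 - pr (cs x₀, x₀) / ∑ c, pr (c, x₀))) +
            ∑ x, (pr (cs x, x) - pr (cq x, x)))) ∧
    (∑ x, (pr (cs x, x) - pr (cq x, x))) *
        (1 + (1 - 2 * t - ∑ x, (pr (cs x, x) - pr (cq x, x))) /
          (2 * (t - (1 - pr (cs x₀, x₀) / ∑ c, pr (c, x₀))) +
            ∑ x, (pr (cs x, x) - pr (cq x, x)))) ≥
      (∑ x, (pr (cs x, x) - pr (cq x, x))) /
        (2 * t + ∑ x, (pr (cs x, x) - pr (cq x, x))) := by
  classical
  set p₀ : ℝ := ∑ c, pr (c, x₀) with hp₀def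
  set S : ℝ := pr (cs x₀, x₀) with hSdef
  set Δ : ℝ := ∑ x, (pr (cs x, x) - pr (cq x, x)) with hΔdef
  have hp₀pos : 0 < p₀ := hx₀pos
  have hp₀lt : p₀ < 1 := hx₀lt
  -- if the marginal is zero, every joint value is zero
  have hx0 : ∀ (x : X) (c : C), (∑ c', pr (c', x)) = 0 → pr (c, x) = 0 := by
    intro x c h
    exact (Finset.sum_eq_zero_iff_of_nonneg (fun c' _ => hpr0 (c', x))).1 h c (Finset.mem_univ c)
  have hdx₀ : pr (cs x₀, x₀) - pr (cq x₀, x₀) = 0 := by rw [hx₀eq]; ring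
  -- the erase-sum equals Δ
  have hsum : ∑ x ∈ Finset.univ.erase x₀,
      (∑ c, pr (c, x)) * ((pr (cs x, x) - pr (cq x, x)) / ∑ c, pr (c, x)) = Δ := by
    have h1 : ∀ x ∈ Finset.univ.erase x₀,
        (∑ c, pr (c, x)) * ((pr (cs x, x) - pr (cq x, x)) / ∑ c, pr (c, x))
          = pr (cs x, x) - pr (cq x, x) := by
      intro x _
      by_cases hz : (∑ c, pr (c, x)) = 0
      · rw [hz, hx0 x (cs x) hz, hx0 x (cq x) hz]; ring
      · rw [mul_div_cancel₀ _ hz]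
    rw [Finset.sum_congr rfl h1, Finset.sum_erase_eq_sub (Finset.mem_univ x₀), hdx₀,
      sub_zero, ← hΔdef]
  -- total marginal mass is 1
  have htot : ∑ x, ∑ c, pr (c, x) = 1 := by
    rw [← Fintype.sum_prod_type_right, hpr1]
  -- each mismatch term is nonnegative
  have hd0 : ∀ x, 0 ≤ pr (cs x, x) - pr (cq x, x) := fun x => sub_nonneg.2 (hcs x (cq x))
  -- key pointwise bound away from x₀
  have h2 : ∀ x ∈ Finset.univ.erase x₀,
      2 * pr (cs x, x) ≤ (∑ c, pr (c, x)) + (pr (cs x, x) - pr (cq x, x)) := by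
    intro x hx
    have hxne : x ≠ x₀ := (Finset.mem_erase.1 hx).1
    by_cases hz : (∑ c, pr (c, x)) = 0
    · rw [hz, hx0 x (cs x) hz, hx0 x (cq x) hz]; norm_num
    · have hpos : 0 < ∑ c, pr (c, x) :=
        lt_of_le_of_ne (Finset.sum_nonneg fun c _ => hpr0 (c, x)) (Ne.symm hz)
      have hne : cs x ≠ cq x := hdisagree x hxne hpos
      have hpair : pr (cs x, x) + pr (cq x, x) ≤ ∑ c, pr (c, x) := by
        have hsub : ∑ c ∈ ({cs x, cq x} : Finset C), pr (c, x) ≤ ∑ c, pr (c, x) :=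
          Finset.sum_le_sum_of_subset_of_nonneg (Finset.subset_univ _)
            (fun c _ _ => hpr0 (c, x))
        rwa [Finset.sum_pair hne] at hsub
      linarith
  -- key global inequality : 1 ≤ 2t + Δ + 2S − p₀
  have hK : 1 ≤ 2 * t + Δ + 2 * S - p₀ := by
    have hsum2 : ∑ x ∈ Finset.univ.erase x₀, (2 * pr (cs x, x))
        ≤ ∑ x ∈ Finset.univ.erase x₀,
            ((∑ c, pr (c, x)) + (pr (cs x, x) - pr (cq x, x))) :=
      Finset.sum_le_sum h2
    rw [Finset.sum_add_distrib] at hsum2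
    have e1 : ∑ x ∈ Finset.univ.erase x₀, (2 * pr (cs x, x))
        = 2 * ((∑ x, pr (cs x, x)) - S) := by
      rw [← Finset.mul_sum, Finset.sum_erase_eq_sub (Finset.mem_univ x₀), hSdef]
    have e2 : ∑ x ∈ Finset.univ.erase x₀, (∑ c, pr (c, x)) = 1 - p₀ := by
      rw [Finset.sum_erase_eq_sub (Finset.mem_univ x₀), htot, hp₀def]
    have e3 : ∑ x ∈ Finset.univ.erase x₀, (pr (cs x, x) - pr (cq x, x)) = Δ := by
      rw [Finset.sum_erase_eq_sub (Finset.mem_univ x₀), hdx₀, sub_zero, ← hΔdef]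
    rw [e1, e2, e3] at hsum2
    have hT : 1 - t ≤ ∑ x, pr (cs x, x) := by linarith
    linarith
  have hSp : S / p₀ * p₀ = S := div_mul_cancel₀ _ hp₀pos.ne'
  have hSle : S ≤ p₀ := Finset.single_le_sum (fun c _ => hpr0 (c, x₀)) (Finset.mem_univ (cs x₀))
  have hu : 0 < 1 - 2 * t - Δ := by linarith
  set D : ℝ := 2 * (t - (1 - S / p₀)) + Δ with hDdef
  have hpD : p₀ * D = 2 * t * p₀ - 2 * p₀ + 2 * S + Δ * p₀ := by
    rw [hDdef]
    field_simp
    ring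
  have hDpos : 0 < D := by
    have h := mul_pos hu (sub_pos.2 hp₀lt)
    nlinarith [hpD, hK, h, hp₀pos]
  have hDle : D ≤ 2 * t + Δ := by
    have : S / p₀ ≤ 1 := (div_le_one hp₀pos).2 hSle
    rw [hDdef]; linarith
  have h2tΔ : 0 < 2 * t + Δ := lt_of_lt_of_le hDpos hDle
  have hcross : (1 - p₀) * (1 - 2 * t - Δ) ≤ p₀ * D := by
    nlinarith [hpD, hK]
  constructor
  · -- first inequality
    rw [hsum, ge_iff_le]
    have hfrac : 1 + (1 - 2 * t - Δ) / D ≤ 1 / (1 - p₀) := by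
      have h1p : (0:ℝ) < 1 - p₀ := by linarith
      rw [show 1 + (1 - 2 * t - Δ) / D = (D + (1 - 2 * t - Δ)) / D by
            field_simp,
          div_le_div_iff₀ hDpos h1p]
      nlinarith [hcross]
    calc Δ * (1 + (1 - 2 * t - Δ) / D)
        ≤ Δ * (1 / (1 - p₀)) := mul_le_mul_of_nonneg_left hfrac hΔpos.le
      _ = 1 / (1 - p₀) * Δ := mul_comm _ _
  · -- second inequality
    rw [ge_iff_le]
    have hfrac2 : 1 / (2 * t + Δ) ≤ 1 + (1 - 2 * t - Δ) / D := by
      rw [show 1 + (1 - 2 * t - Δ) / D = (D + (1 - 2 * t - Δ)) / D by field_simp,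
          div_le_div_iff₀ h2tΔ hDpos]
      nlinarith [mul_nonneg hu.le (sub_nonneg.2 hDle)]
    calc Δ / (2 * t + Δ) = Δ * (1 / (2 * t + Δ)) := by ring
      _ ≤ Δ * (1 + (1 - 2 * t - Δ) / D) := mul_le_mul_of_nonneg_left hfrac2 hΔpos.le
end

section
/- Under the stated hypotheses, the local Bayes error at x₀ satisfies E{e_*|x₀} < 1/2, and moreover 2t − 2·E{e_*|x₀} + Δ_q > 0. -/
/-- Under the stated hypotheses, the local Bayes error at `x₀`,
`E{e_*|x₀} := 1 − pr(c_*^{x₀},x₀)/pr(x₀)`, satisfies `E{e_*|x₀} < 1/2`, and moreover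
`2t − 2·E{e_*|x₀} + Δ_q > 0` where `Δ_q := ∑_x (pr(c_*^x,x) − pr(c_q^x,x))`. -/
theorem local_bayes_error_lt_half {C X : Type*} [Fintype C] [Fintype X]
    (pr q : C × X → ℝ)
    (hpr0 : ∀ p, 0 ≤ pr p) (hpr1 : ∑ p, pr p = 1)
    (hq0 : ∀ p, 0 ≤ q p) (hq1 : ∑ p, q p = 1)
    (cs cq : X → C)
    (hcs : ∀ x c, pr (c, x) ≤ pr (cs x, x))
    (hcq : ∀ x c, q (c, x) ≤ q (cq x, x))
    (t : ℝ) (ht : t < 1 / 2)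
    (hE : 1 - ∑ x, pr (cs x, x) ≤ t)
    (hΔpos : 0 < ∑ x, (pr (cs x, x) - pr (cq x, x)))
    (hΔ : ∑ x, (pr (cs x, x) - pr (cq x, x)) < 1 - 2 * t)
    (x₀ : X) (hx₀pos : 0 < ∑ c, pr (c, x₀)) (hx₀lt : ∑ c, pr (c, x₀) < 1)
    (hx₀eq : cs x₀ = cq x₀)
    (hdisagree : ∀ x, x ≠ x₀ → 0 < ∑ c, pr (c, x) → cs x ≠ cq x) :
    (1 - pr (cs x₀, x₀) / ∑ c, pr (c, x₀)) < 1 / 2 ∧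
    0 < 2 * t - 2 * (1 - pr (cs x₀, x₀) / ∑ c, pr (c, x₀)) +
        ∑ x, (pr (cs x, x) - pr (cq x, x)) := by
  classical
  set p₀ : ℝ := ∑ c, pr (c, x₀) with hp₀
  set s : ℝ := pr (cs x₀, x₀) with hs
  set S : ℝ := ∑ x, pr (cs x, x) with hS
  set Δ : ℝ := ∑ x, (pr (cs x, x) - pr (cq x, x)) with hΔdef
  -- marginal sums to 1
  have hpX1 : ∑ x, ∑ c, pr (c, x) = 1 := by
    rw [← hpr1, Fintype.sum_prod_type, Finset.sum_comm]
  -- pointwise bound on x ≠ x₀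
  have hkey : ∀ x, x ≠ x₀ → pr (cs x, x) + pr (cq x, x) ≤ ∑ c, pr (c, x) := by
    intro x hx
    rcases eq_or_lt_of_le (Finset.sum_nonneg fun c _ => hpr0 (c, x)) with h0 | hpos
    · have h1 : pr (cs x, x) = 0 := le_antisymm (by
        calc pr (cs x, x) ≤ ∑ c, pr (c, x) :=
          Finset.single_le_sum (fun c _ => hpr0 (c, x)) (Finset.mem_univ _)
        _ = 0 := h0.symm) (hpr0 _)
      have h2 : pr (cq x, x) = 0 := le_antisymm (by
        calc pr (cq x, x) ≤ ∑ c, pr (c, x) :=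
          Finset.single_le_sum (fun c _ => hpr0 (c, x)) (Finset.mem_univ _)
        _ = 0 := h0.symm) (hpr0 _)
      rw [h1, h2, ← h0]; norm_num
    · have hne := hdisagree x hx hpos
      have : ∑ c ∈ ({cs x, cq x} : Finset C), pr (c, x) ≤ ∑ c, pr (c, x) :=
        Finset.sum_le_sum_of_subset_of_nonneg (Finset.subset_univ _)
          (fun c _ _ => hpr0 (c, x))
      rwa [Finset.sum_pair hne] at this
  -- term at x₀ vanishes
  have hterm0 : pr (cs x₀, x₀) - pr (cq x₀, x₀) = 0 := by rw [hx₀eq]; ring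
  -- lower bound Δ
  have hΔerase : Δ = ∑ x ∈ Finset.univ.erase x₀, (pr (cs x, x) - pr (cq x, x)) := by
    rw [Finset.sum_erase_eq_sub (Finset.mem_univ x₀), hterm0, sub_zero]
  have hlb : ∑ x ∈ Finset.univ.erase x₀, (2 * pr (cs x, x) - ∑ c, pr (c, x)) ≤ Δ := by
    rw [hΔerase]
    refine Finset.sum_le_sum fun x hx => ?_
    have := hkey x (Finset.ne_of_mem_erase hx)
    linarith
  have heval : ∑ x ∈ Finset.univ.erase x₀, (2 * pr (cs x, x) - ∑ c, pr (c, x))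
      = 2 * S - 2 * s - (1 - p₀) := by
    rw [Finset.sum_sub_distrib, Finset.sum_erase_eq_sub (Finset.mem_univ x₀),
      Finset.sum_erase_eq_sub (Finset.mem_univ x₀), hpX1, ← Finset.mul_sum]
  have hΔlow : 1 - 2 * t - 2 * s + p₀ ≤ Δ := by
    rw [heval] at hlb; linarith
  have h2s : p₀ < 2 * s := by linarith
  have hdiv : s / p₀ * p₀ = s := div_mul_cancel₀ s (ne_of_gt hx₀pos)
  have hhalf : 1 / 2 < s / p₀ := by
    rw [div_lt_div_iff₀ (by norm_num) hx₀pos]; linarith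
  refine ⟨by linarith, ?_⟩
  nlinarith [mul_pos (by linarith : (0:ℝ) < 2 * (s / p₀) - 1) (by linarith : (0:ℝ) < 1 - p₀)]
end

section
/- Under the stated hypotheses, the unnormalized Bayes error mass off x₀ satisfies ∑_{x ≠ x₀} pr(x)·E{e_*|x} > t − pr(x₀)/2. -/
/-- Under the stated hypotheses, the unnormalized Bayes error mass off `x₀` satisfies
`∑_{x ≠ x₀} (pr(x) − pr(c_*^x,x)) > t − pr(x₀)/2`. -/
theorem offx0_bayes_error_mass_bound {C X : Type*} [Fintype C] [Fintype X] [DecidableEq X]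
    (pr q : C × X → ℝ)
    (hpr0 : ∀ p, 0 ≤ pr p) (hpr1 : ∑ p, pr p = 1)
    (hq0 : ∀ p, 0 ≤ q p) (hq1 : ∑ p, q p = 1)
    (cs cq : X → C)
    (hcs : ∀ x c, pr (c, x) ≤ pr (cs x, x))
    (hcq : ∀ x c, q (c, x) ≤ q (cq x, x))
    (t : ℝ) (ht : t < 1 / 2)
    (hE : 1 - ∑ x, pr (cs x, x) ≤ t)
    (hΔpos : 0 < ∑ x, (pr (cs x, x) - pr (cq x, x)))
    (hΔ : ∑ x, (pr (cs x, x) - pr (cq x, x)) < 1 - 2 * t)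
    (x₀ : X) (hx₀pos : 0 < ∑ c, pr (c, x₀)) (hx₀lt : ∑ c, pr (c, x₀) < 1)
    (hx₀eq : cs x₀ = cq x₀)
    (hdisagree : ∀ x, x ≠ x₀ → 0 < ∑ c, pr (c, x) → cs x ≠ cq x) :
    ∑ x ∈ Finset.univ.erase x₀, ((∑ c, pr (c, x)) - pr (cs x, x)) >
      t - (∑ c, pr (c, x₀)) / 2 := by
  classical
  -- pointwise bound for x ≠ x₀
  have key : ∀ x ∈ Finset.univ.erase x₀,
      pr (cq x, x) ≤ (∑ c, pr (c, x)) - pr (cs x, x) := by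
    intro x hx
    have hxne : x ≠ x₀ := Finset.ne_of_mem_erase hx
    by_cases hpos : 0 < ∑ c, pr (c, x)
    · have hne : cs x ≠ cq x := hdisagree x hxne hpos
      have hsub : ({cs x, cq x} : Finset C) ⊆ Finset.univ := Finset.subset_univ _
      have h2 : pr (cs x, x) + pr (cq x, x) = ∑ c ∈ ({cs x, cq x} : Finset C), pr (c, x) := by
        rw [Finset.sum_pair hne]
      have hle : ∑ c ∈ ({cs x, cq x} : Finset C), pr (c, x) ≤ ∑ c, pr (c, x) :=
        Finset.sum_le_sum_of_subset_of_nonneg hsub (fun c _ _ => hpr0 (c, x))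
      linarith
    · have hz : ∑ c, pr (c, x) = 0 := by
        have := Finset.sum_nonneg (fun c (_ : c ∈ Finset.univ) => hpr0 (c, x))
        linarith
      have hall : ∀ c, pr (c, x) = 0 := by
        intro c
        have := (Finset.sum_eq_zero_iff_of_nonneg
          (fun c (_ : c ∈ Finset.univ) => hpr0 (c, x))).mp hz c (Finset.mem_univ c)
        exact this
      rw [hz, hall (cq x), hall (cs x)]; norm_num
  set S := ∑ x ∈ Finset.univ.erase x₀, ((∑ c, pr (c, x)) - pr (cs x, x)) with hS
  have h1 : ∑ x ∈ Finset.univ.erase x₀, pr (cq x, x) ≤ S := Finset.sum_le_sum key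
  have hsplitq : ∑ x ∈ Finset.univ.erase x₀, pr (cq x, x)
      = (∑ x, pr (cq x, x)) - pr (cq x₀, x₀) := by
    rw [← Finset.sum_erase_add Finset.univ _ (Finset.mem_univ x₀)]; ring
  have hsplitS : S = (∑ x, ((∑ c, pr (c, x)) - pr (cs x, x)))
      - ((∑ c, pr (c, x₀)) - pr (cs x₀, x₀)) := by
    rw [hS, ← Finset.sum_erase_add Finset.univ _ (Finset.mem_univ x₀)]; ring
  have htot : ∑ x, ((∑ c, pr (c, x)) - pr (cs x, x))
      = 1 - ∑ x, pr (cs x, x) := by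
    rw [Finset.sum_sub_distrib]
    have : ∑ x : X, ∑ c, pr (c, x) = ∑ p, pr p := by
      rw [Fintype.sum_prod_type]
      rw [Finset.sum_comm]
    rw [this, hpr1]
  have hABsub : ∑ x, (pr (cs x, x) - pr (cq x, x))
      = (∑ x, pr (cs x, x)) - ∑ x, pr (cq x, x) := Finset.sum_sub_distrib _ _
  have hq0eq : pr (cq x₀, x₀) = pr (cs x₀, x₀) := by rw [hx₀eq]
  -- combine
  rw [hABsub] at hΔ
  rw [hsplitq, hq0eq] at h1
  linarith [hsplitS, htot]
end

section
/- If for every observation x with pr(x) > 0 the Bayes decision and the model-based decision disagree (c_*^x ≠ c_q^x), then the global error mismatch satisfies Δ_q ≥ 1 − 2·E_*. -/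
/-- If the Bayes and model-based decisions disagree at every observation `x` with
`pr(x) > 0`, then `Δ_q ≥ 1 − 2·E_*`, where `Δ_q := ∑_x (pr(c_*^x,x) − pr(c_q^x,x))`
and `E_* := 1 − ∑_x pr(c_*^x,x)`. -/
theorem mismatch_ge_of_all_disagree {C X : Type*} [Fintype C] [Fintype X]
    (pr q : C × X → ℝ)
    (hpr0 : ∀ p, 0 ≤ pr p) (hpr1 : ∑ p, pr p = 1)
    (hq0 : ∀ p, 0 ≤ q p) (hq1 : ∑ p, q p = 1)
    (cs cq : X → C)
    (hcs : ∀ x c, pr (c, x) ≤ pr (cs x, x))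
    (hcq : ∀ x c, q (c, x) ≤ q (cq x, x))
    (hdisagree : ∀ x, 0 < ∑ c, pr (c, x) → cs x ≠ cq x) :
    ∑ x, (pr (cs x, x) - pr (cq x, x)) ≥ 1 - 2 * (1 - ∑ x, pr (cs x, x)) := by
  classical
  have key : ∑ x, (pr (cs x, x) + pr (cq x, x)) ≤ 1 := by
    have h1 : ∀ x, pr (cs x, x) + pr (cq x, x) ≤ ∑ c, pr (c, x) := by
      intro x
      by_cases hx : 0 < ∑ c, pr (c, x)
      · have hne := hdisagree x hx
        calc pr (cs x, x) + pr (cq x, x)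
            = ∑ c ∈ ({cs x, cq x} : Finset C), pr (c, x) := by
              rw [Finset.sum_pair hne]
          _ ≤ ∑ c, pr (c, x) := by
              apply Finset.sum_le_sum_of_subset_of_nonneg (Finset.subset_univ _)
              intro c _ _; exact hpr0 _
      · have h0 : ∑ c, pr (c, x) = 0 :=
          le_antisymm (not_lt.mp hx) (Finset.sum_nonneg fun c _ => hpr0 _)
        have hall : ∀ c ∈ Finset.univ, pr (c, x) = 0 :=
          (Finset.sum_eq_zero_iff_of_nonneg (fun c _ => hpr0 _)).mp h0
        rw [h0, hall (cs x) (Finset.mem_univ _), hall (cq x) (Finset.mem_univ _)]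
        norm_num
    calc ∑ x, (pr (cs x, x) + pr (cq x, x)) ≤ ∑ x, ∑ c, pr (c, x) :=
          Finset.sum_le_sum fun x _ => h1 x
      _ = ∑ p, pr p := by rw [Finset.sum_comm, ← Fintype.sum_prod_type']
      _ = 1 := hpr1
  have : ∑ x, (pr (cs x, x) - pr (cq x, x)) =
      2 * ∑ x, pr (cs x, x) - ∑ x, (pr (cs x, x) + pr (cq x, x)) := by
    rw [Finset.sum_sub_distrib, Finset.sum_add_distrib]; ring
  rw [this]; linarith
end

section
/- Let f : [0,∞) → ℝ be convex with f(1) = 0, let Δ ∈ (0,1] and ε ∈ (0,1). Then (1+ε)·f((1−Δ)/(1+ε)) ≥ f(1−Δ)·(1 + ε/Δ). -/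
/-- For convex `f : [0,∞) → ℝ` with `f(1) = 0`, `Δ ∈ (0,1]` and `ε ∈ (0,1)`:
`(1+ε)·f((1−Δ)/(1+ε)) ≥ f(1−Δ)·(1 + ε/Δ)`. -/
theorem convex_scaling_ineq_left (f : ℝ → ℝ)
    (hf : ConvexOn ℝ (Set.Ici (0 : ℝ)) f) (hf1 : f 1 = 0)
    (Δ ε : ℝ) (hΔ0 : 0 < Δ) (hΔ1 : Δ ≤ 1) (hε0 : 0 < ε) (hε1 : ε < 1) :
    (1 + ε) * f ((1 - Δ) / (1 + ε)) ≥ f (1 - Δ) * (1 + ε / Δ) := by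
  have hε1' : (0:ℝ) < 1 + ε := by linarith
  have hde : (0:ℝ) < Δ + ε := by linarith
  set x : ℝ := (1 - Δ) / (1 + ε) with hx
  set a : ℝ := Δ * (1 + ε) / (Δ + ε) with hadef
  have ha : 0 ≤ a := by positivity
  have hb : 0 ≤ 1 - a := by
    rw [hadef]
    rw [sub_nonneg, div_le_one hde]
    nlinarith
  have hxmem : x ∈ Set.Ici (0:ℝ) := by
    rw [hx]
    exact Set.mem_Ici.2 (div_nonneg (by linarith) (le_of_lt hε1'))
  have h1mem : (1:ℝ) ∈ Set.Ici (0:ℝ) := by norm_num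
  have key := hf.2 hxmem h1mem ha hb (by ring)
  have hcomb : a • x + (1 - a) • (1:ℝ) = 1 - Δ := by
    rw [hadef, hx, smul_eq_mul, smul_eq_mul]; field_simp; ring
  rw [hcomb, hf1, smul_eq_mul, smul_eq_mul, mul_zero, add_zero] at key
  -- key : f (1 - Δ) ≤ a * f x
  have haval : a * (Δ + ε) = Δ * (1 + ε) := by
    rw [hadef]; field_simp
  have h2 : (1 + ε / Δ) = (Δ + ε) / Δ := by field_simp
  rw [ge_iff_le, h2, ← mul_div_assoc, div_le_iff₀ hΔ0]
  have h3 : a * f x * (Δ + ε) = Δ * (1 + ε) * f x := by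
    rw [hadef]; field_simp
  nlinarith [mul_le_mul_of_nonneg_right key hde.le, h3]
end

section
/- Let f : [0,∞) → ℝ be convex with f(1) = 0, let Δ ∈ (0,1] and ε ∈ (0,1). Then (1−ε)·f((1+Δ)/(1−ε)) ≥ f(1+Δ)·(1 + ε/Δ). -/
/-- For convex `f : [0,∞) → ℝ` with `f(1) = 0`, `Δ ∈ (0,1]` and `ε ∈ (0,1)`:
`(1−ε)·f((1+Δ)/(1−ε)) ≥ f(1+Δ)·(1 + ε/Δ)`. -/
theorem convex_scaling_ineq_right (f : ℝ → ℝ)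
    (hf : ConvexOn ℝ (Set.Ici (0 : ℝ)) f) (hf1 : f 1 = 0)
    (Δ ε : ℝ) (hΔ0 : 0 < Δ) (hΔ1 : Δ ≤ 1) (hε0 : 0 < ε) (hε1 : ε < 1) :
    (1 - ε) * f ((1 + Δ) / (1 - ε)) ≥ f (1 + Δ) * (1 + ε / Δ) := by
  have hεΔ : 0 < ε + Δ := by linarith
  have h1ε : 0 < 1 - ε := by linarith
  set a := ε * (1 + Δ) / (ε + Δ) with ha
  set b := Δ * (1 - ε) / (ε + Δ) with hb
  have ha0 : 0 ≤ a := by positivity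
  have hb0 : 0 ≤ b := by positivity
  have hab : a + b = 1 := by rw [ha, hb, ← add_div, div_eq_one_iff_eq hεΔ.ne']; ring
  have hx : (1 : ℝ) ∈ Set.Ici (0 : ℝ) := by norm_num
  have hy : (1 + Δ) / (1 - ε) ∈ Set.Ici (0 : ℝ) := by
    simp only [Set.mem_Ici]; positivity
  have key := hf.2 hx hy ha0 hb0 hab
  have hcomb : a • (1:ℝ) + b • ((1 + Δ) / (1 - ε)) = 1 + Δ := by
    simp only [smul_eq_mul, ha, hb]
    field_simp
  rw [hcomb, hf1] at key
  simp only [smul_eq_mul, mul_zero, zero_add] at key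
  -- key : f (1 + Δ) ≤ b * f ((1+Δ)/(1-ε))
  have hbval : b * ((ε + Δ) / Δ) = 1 - ε := by
    field_simp [hb]
    rw [hb, div_mul_cancel₀ _ hεΔ.ne']
  have hdiv : 1 + ε / Δ = (ε + Δ) / Δ := by field_simp; ring
  rw [ge_iff_le, hdiv]
  have hpos : 0 < (ε + Δ) / Δ := by positivity
  calc f (1 + Δ) * ((ε + Δ) / Δ) ≤ (b * f ((1 + Δ) / (1 - ε))) * ((ε + Δ) / Δ) := by
        apply mul_le_mul_of_nonneg_right key hpos.le
    _ = (1 - ε) * f ((1 + Δ) / (1 - ε)) := by rw [mul_right_comm, hbval]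
end

section
/- Intermediate aggregation bound for the local f-divergence: with ε := q(c_q) − q(c_*), if ε < 1 then D_f(p‖q) ≥ ((1+ε)/2)·f((1−Δ)/(1+ε)) + ((1−ε)/2)·f((1+Δ)/(1−ε)). -/
private lemma jensen_step {C : Type*} [Fintype C] (w x : C → ℝ)
    (hw : ∀ c, 0 ≤ w c) (hx : ∀ c, 0 ≤ x c) (hsum : 0 < ∑ c, w c)
    (f : ℝ → ℝ) (hf : ConvexOn ℝ (Set.Ici (0 : ℝ)) f) :
    (∑ c, w c) * f ((∑ c, w c * x c) / (∑ c, w c)) ≤ ∑ c, w c * f (x c) := by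
  have h := hf.map_centerMass_le (t := Finset.univ) (w := w) (p := x)
    (fun i _ => hw i) (by simpa using hsum) (fun i _ => hx i)
  rw [Finset.centerMass, Finset.centerMass] at h
  simp only [smul_eq_mul, Function.comp] at h
  have hne : (∑ c, w c) ≠ 0 := hsum.ne'
  calc (∑ c, w c) * f ((∑ c, w c * x c) / (∑ c, w c))
      = (∑ c, w c) * f ((∑ c, w c)⁻¹ * ∑ c, w c * x c) := by rw [div_eq_inv_mul]
    _ ≤ (∑ c, w c) * ((∑ c, w c)⁻¹ * ∑ c, w c * f (x c)) :=
        mul_le_mul_of_nonneg_left h hsum.le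
    _ = ∑ c, w c * f (x c) := by field_simp

/-- Intermediate aggregation bound for the local f-divergence: with
`ε := q(c_q) − q(c_*)` and `Δ := p(c_*) − p(c_q)`, if `ε < 1` then
`D_f(p‖q) ≥ ((1+ε)/2)·f((1−Δ)/(1+ε)) + ((1−ε)/2)·f((1+Δ)/(1−ε))`. -/
theorem local_f_divergence_intermediate_bound {C : Type*} [Fintype C]
    (p q : C → ℝ)
    (hp0 : ∀ c, 0 ≤ p c) (hp1 : ∑ c, p c = 1)
    (hq0 : ∀ c, 0 < q c) (hq1 : ∑ c, q c = 1)
    (cs cq : C) (hne : cs ≠ cq)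
    (hcs : ∀ c, p c ≤ p cs) (hcq : ∀ c, q c ≤ q cq)
    (f : ℝ → ℝ) (hf : ConvexOn ℝ (Set.Ici (0 : ℝ)) f) (hf1 : f 1 = 0)
    (hε : q cq - q cs < 1) :
    ∑ c, q c * f (p c / q c) ≥
      ((1 + (q cq - q cs)) / 2) * f ((1 - (p cs - p cq)) / (1 + (q cq - q cs))) +
      ((1 - (q cq - q cs)) / 2) * f ((1 + (p cs - p cq)) / (1 - (q cq - q cs))) := by
  classical
  set ε := q cq - q cs with hεdef
  set Δ := p cs - p cq with hΔdef
  have hεnn : 0 ≤ ε := sub_nonneg.mpr (hcq cs)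
  have h1ε : 0 < 1 + ε := by linarith
  have h2ε : 0 < 1 - ε := by linarith
  set a : C → ℝ := fun c => if c = cs then 0 else if c = cq then 1 else 1/2 with hadef
  have ha01 : ∀ c, 0 ≤ a c ∧ a c ≤ 1 := by
    intro c; simp only [hadef]; split_ifs <;> norm_num
  have ha_eq : ∀ c, a c =
      1/2 + ((if c = cq then (1:ℝ) else 0) - (if c = cs then 1 else 0))/2 := by
    intro c
    by_cases h1 : c = cs
    · subst h1; norm_num [hadef, hne]
    · by_cases h2 : c = cq
      · subst h2; norm_num [hadef, h1]
      · norm_num [hadef, h1, h2]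
  have key : ∀ g : C → ℝ, ∑ c, g c * a c = (∑ c, g c)/2 + (g cq - g cs)/2 := by
    intro g
    have hterm : ∀ c, g c * a c =
        g c * (1/2) + ((if c = cq then g c else 0) - (if c = cs then g c else 0))/2 := by
      intro c; rw [ha_eq c]; split_ifs <;> ring
    rw [Finset.sum_congr rfl (fun c _ => hterm c)]
    rw [Finset.sum_add_distrib, ← Finset.sum_div, Finset.sum_sub_distrib]
    simp [Finset.sum_ite_eq', ← Finset.sum_mul]
    ring
  have hqa : ∑ c, q c * a c = (1 + ε)/2 := by rw [key q, hq1]; ring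
  have hpa : ∑ c, p c * a c = (1 - Δ)/2 := by rw [key p, hp1]; ring
  have hqa' : ∑ c, q c * (1 - a c) = (1 - ε)/2 := by
    have : ∀ c, q c * (1 - a c) = q c - q c * a c := fun c => by ring
    rw [Finset.sum_congr rfl (fun c _ => this c), Finset.sum_sub_distrib, hq1, hqa]; ring
  have hpa' : ∑ c, p c * (1 - a c) = (1 + Δ)/2 := by
    have : ∀ c, p c * (1 - a c) = p c - p c * a c := fun c => by ring
    rw [Finset.sum_congr rfl (fun c _ => this c), Finset.sum_sub_distrib, hp1, hpa]; ring
  have hqne : ∀ c, q c ≠ 0 := fun c => (hq0 c).ne'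
  -- first Jensen application
  have hx : ∀ c, 0 ≤ p c / q c := fun c => div_nonneg (hp0 c) (hq0 c).le
  have hwx1 : ∑ c, (q c * a c) * (p c / q c) = (1 - Δ)/2 := by
    rw [← hpa]
    refine Finset.sum_congr rfl (fun c _ => ?_)
    calc (q c * a c) * (p c / q c) = p c * a c * (q c / q c) := by ring
      _ = p c * a c := by rw [div_self (hqne c), mul_one]
  have hwx2 : ∑ c, (q c * (1 - a c)) * (p c / q c) = (1 + Δ)/2 := by
    rw [← hpa']
    refine Finset.sum_congr rfl (fun c _ => ?_)
    calc (q c * (1 - a c)) * (p c / q c) = p c * (1 - a c) * (q c / q c) := by ring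
      _ = p c * (1 - a c) := by rw [div_self (hqne c), mul_one]
  have hs1 : (0:ℝ) < ∑ c, q c * a c := by rw [hqa]; positivity
  have hs2 : (0:ℝ) < ∑ c, q c * (1 - a c) := by rw [hqa']; positivity
  have j1 := jensen_step (fun c => q c * a c) (fun c => p c / q c)
    (fun c => mul_nonneg (hq0 c).le (ha01 c).1) hx hs1 f hf
  have j2 := jensen_step (fun c => q c * (1 - a c)) (fun c => p c / q c)
    (fun c => mul_nonneg (hq0 c).le (by linarith [(ha01 c).2])) hx hs2 f hf
  simp only [hqa, hwx1, hqa', hwx2] at j1 j2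
  have harg1 : ((1 - Δ)/2) / ((1 + ε)/2) = (1 - Δ)/(1 + ε) := by
    field_simp
  have harg2 : ((1 + Δ)/2) / ((1 - ε)/2) = (1 + Δ)/(1 - ε) := by
    field_simp
  rw [harg1] at j1
  rw [harg2] at j2
  have hcombine : ∑ c, (q c * a c) * f (p c / q c) + ∑ c, (q c * (1 - a c)) * f (p c / q c)
      = ∑ c, q c * f (p c / q c) := by
    rw [← Finset.sum_add_distrib]
    exact Finset.sum_congr rfl (fun c _ => by ring)
  linarith
end

section
/- Tightness of the local KL bound: let C be a finite type with at least two elements. For every Δ ∈ (0,1] and every δ > 0, there exist pmfs p and q on C and distinct classes a, b ∈ C such that a is the unique maximizer of p, b is the unique maximizer of q, p(a) − p(b) = Δ, p(c) = 0 implies the corresponding KL term is 0 (and p is supported where q is positive), and ∑_c p(c)·log(p(c)/q(c)) ≤ B(Δ) + δ. -/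
/-- Tightness of the local KL bound: for every `Δ ∈ (0,1]` and `δ > 0` there are pmfs
`p, q` on `C` and distinct classes `a, b` with `a` the unique maximizer of `p`,
`b` the unique maximizer of `q`, `p a − p b = Δ`, `p` supported where `q` is positive,
and `∑_c p(c)·log(p(c)/q(c)) ≤ B(Δ) + δ`. (Terms with `p c = 0` contribute `0` since
`0 * log _ = 0`.) -/
theorem local_kl_bound_tight {C : Type*} [Fintype C] [Nontrivial C]
    (Δ : ℝ) (hΔ0 : 0 < Δ) (hΔ1 : Δ ≤ 1) (δ : ℝ) (hδ : 0 < δ) :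
    ∃ (p q : C → ℝ) (a b : C),
      a ≠ b ∧
      (∀ c, 0 ≤ p c) ∧ (∑ c, p c = 1) ∧
      (∀ c, 0 ≤ q c) ∧ (∑ c, q c = 1) ∧
      (∀ c, c ≠ a → p c < p a) ∧
      (∀ c, c ≠ b → q c < q b) ∧
      p a - p b = Δ ∧
      (∀ c, p c ≠ 0 → 0 < q c) ∧
      ∑ c, p c * Real.log (p c / q c) ≤ B Δ + δ := by
  classical
  obtain ⟨a, b, hab⟩ := exists_pair_ne C
  set e : ℝ := Real.exp (-δ) with he
  have he0 : 0 < e := Real.exp_pos _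
  have he1 : e < 1 := Real.exp_lt_one_iff.mpr (by linarith)
  set p : C → ℝ := fun c => (if c = a then (1 + Δ) / 2 else 0) +
    (if c = b then (1 - Δ) / 2 else 0) with hp
  set q : C → ℝ := fun c => (if c = a then e / 2 else 0) +
    (if c = b then 1 - e / 2 else 0) with hq
  have hpa : p a = (1 + Δ) / 2 := by simp [hp, hab]
  have hpb : p b = (1 - Δ) / 2 := by simp [hp, hab.symm]
  have hqa : q a = e / 2 := by simp [hq, hab]
  have hqb : q b = 1 - e / 2 := by simp [hq, hab.symm]
  have hqb2 : (1:ℝ)/2 ≤ q b := by rw [hqb]; linarith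
  refine ⟨p, q, a, b, hab, ?_, ?_, ?_, ?_, ?_, ?_, ?_, ?_, ?_⟩
  · intro c
    simp only [hp]
    split_ifs <;> linarith
  · simp [hp, Finset.sum_add_distrib, hab]
    ring
  · intro c
    simp only [hq]
    split_ifs <;> linarith
  · simp [hq, Finset.sum_add_distrib, hab]
  · intro c hc
    rw [hpa]
    simp only [hp, if_neg hc]
    split_ifs <;> linarith
  · intro c hc
    rw [hqb]
    simp only [hq, if_neg hc]
    split_ifs <;> linarith
  · rw [hpa, hpb]; ring
  · intro c hc
    simp only [hq]
    by_cases h1 : c = a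
    · simp [h1, hab]; linarith
    · by_cases h2 : c = b
      · simp [h2, hab.symm]; linarith
      · exfalso; apply hc; simp [hp, h1, h2]
  · have hsum : ∑ c, p c * Real.log (p c / q c)
        = p a * Real.log (p a / q a) + p b * Real.log (p b / q b) := by
      have : ∀ c, p c * Real.log (p c / q c)
          = (if c = a then p a * Real.log (p a / q a) else 0) +
            (if c = b then p b * Real.log (p b / q b) else 0) := by
        intro c
        by_cases h1 : c = a
        · simp [h1, hab]
        · by_cases h2 : c = b
          · simp [h2, hab.symm]
          · simp [hp, h1, h2]
      rw [Finset.sum_congr rfl (fun c _ => this c)]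
      simp [Finset.sum_add_distrib]
    rw [hsum, hpa, hpb, hqa, hqb]
    have hA : (1 + Δ) / 2 / (e / 2) = (1 + Δ) / e := by
      field_simp
    have hlogA : Real.log ((1 + Δ) / 2 / (e / 2)) = Real.log (1 + Δ) + δ := by
      rw [hA, Real.log_div (by linarith) (ne_of_gt he0), he, Real.log_exp]
      ring
    have hBterm : (1 - Δ) / 2 * Real.log ((1 - Δ) / 2 / (1 - e / 2))
        ≤ (1 - Δ) / 2 * Real.log (1 - Δ) := by
      rcases eq_or_lt_of_le hΔ1 with h | h
      · simp [← h]
      · have h1 : (0:ℝ) < (1 - Δ) / 2 := by linarith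
        have h2 : (0:ℝ) < 1 - e / 2 := by linarith
        rw [Real.log_div (ne_of_gt h1) (ne_of_gt h2)]
        have hlog2 : Real.log (1 - e / 2) ≥ Real.log (1 / 2) := by
          apply Real.log_le_log (by norm_num)
          linarith
        have h12 : Real.log ((1:ℝ)/2) = - Real.log 2 := by
          rw [Real.log_div (by norm_num) (by norm_num), Real.log_one]; ring
        have hld : Real.log (1 - Δ) = Real.log ((1 - Δ) / 2) + Real.log 2 := by
          rw [Real.log_div (by linarith) (by norm_num)]; ring
        rw [hld]
        nlinarith [h12 ▸ hlog2]
    rw [hlogA]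
    have hfin : (1 + Δ) / 2 * (Real.log (1 + Δ) + δ) + (1 - Δ) / 2 * Real.log (1 - Δ)
        ≤ B Δ + δ := by
      unfold B
      nlinarith
    linarith
end

section
/- Tightness of the refined bound on its second segment: let 0 < t < 1/2, let Δ ∈ [1−2t, 1] and δ > 0. Then there exist probability mass functions pr and q on C × X (where C and X are finite types with at least two elements each), together with choices of maximizers c_*^x of c ↦ pr(c,x) and c_q^x of c ↦ q(c,x), such that the Bayes error satisfies E_* ≤ t, the global error mismatch satisfies Δ_q = Δ, pr is supported where q is positive, and D_KL(pr‖q) ≤ B(Δ) + δ. -/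
/-- Tightness of the refined bound on its second segment: for `0 < t < 1/2`,
`Δ ∈ [1−2t, 1]` and `δ > 0`, there are pmfs `pr, q` on `C × X` together with choices
of maximizers `c_*^x` and `c_q^x` such that `E_* ≤ t`, `Δ_q = Δ`, `pr` is supported
where `q` is positive, and `D_KL(pr‖q) ≤ B(Δ) + δ`.
(Terms with `pr (c, x) = 0` contribute `0` to the KL sum since `0 * log _ = 0`.) -/
theorem refined_bound_tight_second_segment {C X : Type*}
    [Fintype C] [Nontrivial C] [Fintype X] [Nontrivial X]
    (t : ℝ) (ht0 : 0 < t) (ht : t < 1 / 2)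
    (Δ : ℝ) (hΔ0 : 1 - 2 * t ≤ Δ) (hΔ1 : Δ ≤ 1) (δ : ℝ) (hδ : 0 < δ) :
    ∃ (pr q : C × X → ℝ) (cs cq : X → C),
      (∀ p, 0 ≤ pr p) ∧ (∑ p, pr p = 1) ∧
      (∀ p, 0 ≤ q p) ∧ (∑ p, q p = 1) ∧
      (∀ x c, pr (c, x) ≤ pr (cs x, x)) ∧
      (∀ x c, q (c, x) ≤ q (cq x, x)) ∧
      1 - ∑ x, pr (cs x, x) ≤ t ∧
      ∑ x, (pr (cs x, x) - pr (cq x, x)) = Δ ∧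
      (∀ p, pr p ≠ 0 → 0 < q p) ∧
      ∑ c, ∑ x, pr (c, x) * Real.log (pr (c, x) / q (c, x)) ≤ B Δ + δ := by
  classical
  obtain ⟨c0, c1, hc⟩ := exists_pair_ne C
  obtain ⟨x0, x1, hx⟩ := exists_pair_ne X
  have hΔpos : 0 < Δ := by linarith
  set a : ℝ := (1 + Δ) / 2 with ha_def
  set b : ℝ := (1 - Δ) / 2 with hb_def
  have ha : 0 < a := by rw [ha_def]; linarith
  have hb : 0 ≤ b := by rw [hb_def]; linarith
  have hba : b ≤ a := by rw [ha_def, hb_def]; linarith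
  have hne : ((c0 : C), (x0 : X)) ≠ (c1, x0) := by simp [hc]
  refine ⟨fun p => if p = (c0, x0) then a else if p = (c1, x0) then b else 0,
          fun p => if p = (c0, x0) ∨ p = (c1, x0) then 1/2 else 0,
          fun _ => c0, fun _ => c1, ?_, ?_, ?_, ?_, ?_, ?_, ?_, ?_, ?_, ?_⟩
  · intro p; dsimp only; split_ifs <;> simp [ha.le, hb]
  · have : ∀ p : C × X,
        (if p = (c0, x0) then a else if p = (c1, x0) then b else 0) =
        (if p = (c0, x0) then a else 0) + (if p = (c1, x0) then b else 0) := by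
      intro p
      by_cases h1 : p = (c0, x0) <;> by_cases h2 : p = (c1, x0) <;> simp_all
    rw [Finset.sum_congr rfl (fun p _ => this p), Finset.sum_add_distrib]
    simp [Finset.sum_ite_eq', ha_def, hb_def]
    ring
  · intro p; dsimp only; split_ifs <;> norm_num
  · have : ∀ p : C × X,
        (if p = (c0, x0) ∨ p = (c1, x0) then (1:ℝ)/2 else 0) =
        (if p = (c0, x0) then (1:ℝ)/2 else 0) + (if p = (c1, x0) then (1:ℝ)/2 else 0) := by
      intro p
      by_cases h1 : p = (c0, x0) <;> by_cases h2 : p = (c1, x0) <;> simp_all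
    rw [Finset.sum_congr rfl (fun p _ => this p), Finset.sum_add_distrib]
    simp [Finset.sum_ite_eq']
    norm_num
  · intro x c
    by_cases hxx : x = x0
    · subst hxx
      simp only [Prod.mk.injEq, and_true, hc, and_false, if_false]
      split_ifs <;> simp [hba, ha.le, hb]
    · simp [Prod.ext_iff, hxx]
  · intro x c
    by_cases hxx : x = x0
    · subst hxx
      simp only [Prod.mk.injEq, and_true]
      split_ifs <;> simp_all
    · simp [Prod.ext_iff, hxx]
  · have : ∀ x : X, (if ((c0 : C), x) = (c0, x0) then a else if (c0, x) = (c1, x0) then b else 0)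
        = if x = x0 then a else 0 := by
      intro x; simp [Prod.ext_iff, hc]
    rw [Finset.sum_congr rfl (fun x _ => this x)]
    simp [Finset.sum_ite_eq', ha_def]
    linarith
  · have h0 : ∀ x : X, (if ((c0 : C), x) = (c0, x0) then a else if (c0, x) = (c1, x0) then b else 0)
        = if x = x0 then a else 0 := by
      intro x; simp [Prod.ext_iff, hc]
    have h1 : ∀ x : X, (if ((c1 : C), x) = (c0, x0) then a else if (c1, x) = (c1, x0) then b else 0)
        = if x = x0 then b else 0 := by
      intro x; simp [Prod.ext_iff, hc.symm]
    calc ∑ x, ((if ((c0 : C), x) = (c0, x0) then a else if (c0, x) = (c1, x0) then b else 0)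
            - (if ((c1 : C), x) = (c0, x0) then a else if (c1, x) = (c1, x0) then b else 0))
        = ∑ x, ((if x = x0 then a else 0) - (if x = x0 then b else 0)) := by
          exact Finset.sum_congr rfl (fun x _ => by rw [h0 x, h1 x])
      _ = Δ := by
          rw [Finset.sum_sub_distrib]
          simp [Finset.sum_ite_eq', ha_def, hb_def]
          ring
  · intro p hp
    by_cases h1 : p = (c0, x0)
    · simp [h1]
    · by_cases h2 : p = (c1, x0)
      · simp [h2]
      · simp [h1, h2] at hp
  · have hd1 : a * 2 = 1 + Δ := by rw [ha_def]; ring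
    have hd2 : b * 2 = 1 - Δ := by rw [hb_def]; ring
    have key : ∀ p : C × X,
        (if p = (c0, x0) then a else if p = (c1, x0) then b else 0) *
          Real.log ((if p = (c0, x0) then a else if p = (c1, x0) then b else 0) /
            (if p = (c0, x0) ∨ p = (c1, x0) then 1/2 else 0)) =
        (if p = (c0, x0) then a * Real.log (1 + Δ) else 0) +
        (if p = (c1, x0) then b * Real.log (1 - Δ) else 0) := by
      intro p
      by_cases h1 : p = (c0, x0)
      · subst h1
        simp [hne, hd1]
      · by_cases h2 : p = (c1, x0)
        · subst h2
          simp [hc.symm, hd2, Prod.ext_iff]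
        · simp [h1, h2]
    calc ∑ c : C, ∑ x : X,
          (if (c, x) = (c0, x0) then a else if (c, x) = (c1, x0) then b else 0) *
            Real.log ((if (c, x) = (c0, x0) then a else if (c, x) = (c1, x0) then b else 0) /
              (if (c, x) = (c0, x0) ∨ (c, x) = (c1, x0) then 1/2 else 0))
        = ∑ c : C, ∑ x : X, ((if (c, x) = (c0, x0) then a * Real.log (1 + Δ) else 0) +
            (if (c, x) = (c1, x0) then b * Real.log (1 - Δ) else 0)) :=
          Finset.sum_congr rfl (fun c _ => Finset.sum_congr rfl (fun x _ => key (c, x)))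
      _ = a * Real.log (1 + Δ) + b * Real.log (1 - Δ) := by
          simp [Finset.sum_add_distrib, Prod.ext_iff, ite_and, Finset.sum_ite_eq']
      _ ≤ B Δ + δ := by
          have hB : a * Real.log (1 + Δ) + b * Real.log (1 - Δ) = B Δ := by
            rw [B, ha_def, hb_def]; ring
          rw [hB]; linarith
end
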